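/- arXiv:2009.09061 — 3 statements merged into one kernel-verified Lean document; each statement's English description precedes it below -/
import Mathlib

section
/- Let A and B be integers with 1 ≤ B < A, and let P be the generating function of the set of Dyck paths none of whose down-run lengths lies in the arithmetic progression {A·r + B : r ≥ 0}. Then, as formal power series, P = Σ_{0 ≤ k < A, k ≠ B} z^k·P^k + z^A·P^{A+1}. -/
/-- The height of a path (list of up/down steps, `true` = up = +1, `false` = down = −1)
after its first `k` steps. -/
def heightAt (p : List Bool) (k : ℕ) : ℤ :=
  ((p.take k).count true : ℤ) - ((p.take k).count false : ℤ)

/-- A Dyck path: all partial sums nonnegative and total sum zero. -/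
def IsDyck (p : List Bool) : Prop :=
  (∀ k, 0 ≤ heightAt p k) ∧ heightAt p p.length = 0

/-- A peak at height `h`: an up-step immediately followed by a down-step,
the height after the up-step being `h`. -/
def HasPeakAt (p : List Bool) (h : ℤ) : Prop :=
  ∃ i, p[i]? = some true ∧ p[i+1]? = some false ∧ heightAt p (i+1) = h

/-- A valley at height `h`: a down-step immediately followed by an up-step,
the height after the down-step being `h`. -/
def HasValleyAt (p : List Bool) (h : ℤ) : Prop :=
  ∃ i, p[i]? = some false ∧ p[i+1]? = some true ∧ heightAt p (i+1) = h

/-- `p` has an up-run of length `m`: a maximal block of exactly `m` consecutive up-steps. -/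
def HasUpRun (p : List Bool) (m : ℕ) : Prop :=
  ∃ i, (∀ j, j < m → p[i+j]? = some true) ∧
    (i = 0 ∨ p[i-1]? = some false) ∧
    (p[i+m]? = some false ∨ i + m = p.length)

/-- `p` has a down-run of length `m`: a maximal block of exactly `m` consecutive down-steps. -/
def HasDownRun (p : List Bool) (m : ℕ) : Prop :=
  ∃ i, (∀ j, j < m → p[i+j]? = some false) ∧
    (i = 0 ∨ p[i-1]? = some true) ∧
    (p[i+m]? = some true ∨ i + m = p.length)

/-- Generating function of the set of Dyck paths satisfying `Q`:
the coefficient of `z^n` is the number of such paths of semilength `n`. -/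
noncomputable def genFun (Q : List Bool → Prop) : PowerSeries ℕ :=
  PowerSeries.mk fun n => Set.ncard {p : List Bool | p.length = 2 * n ∧ IsDyck p ∧ Q p}

/-!
Every Dyck path factors uniquely as `a₁ U a₂ U ⋯ aₘ U Dᵐ` with Dyck paths `aᵢ`, where `Dᵐ` is
its final down-run (`m = 0` for the empty path), and its down-runs are those of the `aᵢ` together
with that final run. So if `F` is a set of forbidden positive run lengths, the generating function
of the paths avoiding `F` satisfies `P = ∑_{m ∉ F} zᵐ Pᵐ`. For `F = {A r + B}` the allowed `m` are
the `k < A` with `k ≠ B` and the `A + m'` with `m'` allowed, so the tail of the sum is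
`z^A P^A · P`.
-/

open List

def finalHeight (p : List Bool) : ℤ := (p.count true : ℤ) - p.count false

def IsNonnegPath (p : List Bool) : Prop := ∀ k, 0 ≤ heightAt p k

def elevate (w : List Bool) : List Bool := true :: (w ++ [false])

lemma heightAt_eq_finalHeight_take (p : List Bool) (k : ℕ) :
    heightAt p k = finalHeight (p.take k) := rfl

@[simp] lemma finalHeight_nil : finalHeight [] = 0 := rfl

@[simp] lemma finalHeight_cons (b : Bool) (p : List Bool) :
    finalHeight (b :: p) = (if b then 1 else -1) + finalHeight p := by
  cases b <;> simp [finalHeight] <;> ring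

@[simp] lemma finalHeight_append (u v : List Bool) :
    finalHeight (u ++ v) = finalHeight u + finalHeight v := by
  simp only [finalHeight, count_append]; push_cast; ring

@[simp] lemma finalHeight_elevate (w : List Bool) : finalHeight (elevate w) = finalHeight w := by
  simp [elevate]

lemma heightAt_of_length_le {p : List Bool} {k : ℕ} (h : p.length ≤ k) :
    heightAt p k = finalHeight p := by
  rw [heightAt_eq_finalHeight_take, take_of_length_le h]

lemma heightAt_length (p : List Bool) : heightAt p p.length = finalHeight p :=
  heightAt_of_length_le le_rfl

@[simp] lemma heightAt_zero (p : List Bool) : heightAt p 0 = 0 := rfl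

lemma heightAt_cons_succ (b : Bool) (p : List Bool) (k : ℕ) :
    heightAt (b :: p) (k + 1) = (if b then 1 else -1) + heightAt p k := by
  simp [heightAt_eq_finalHeight_take]

lemma heightAt_append_of_le (u v : List Bool) {k : ℕ} (h : k ≤ u.length) :
    heightAt (u ++ v) k = heightAt u k := by
  rw [heightAt_eq_finalHeight_take, heightAt_eq_finalHeight_take, take_append_of_le_length h]

lemma heightAt_append_length_add (u v : List Bool) (j : ℕ) :
    heightAt (u ++ v) (u.length + j) = finalHeight u + heightAt v j := by
  simp [heightAt_eq_finalHeight_take, take_append, take_of_length_le]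

lemma IsNonnegPath.finalHeight_nonneg {p : List Bool} (hp : IsNonnegPath p) :
    0 ≤ finalHeight p :=
  heightAt_length p ▸ hp p.length

lemma isNonnegPath_append_iff {u v : List Bool} :
    IsNonnegPath (u ++ v) ↔ IsNonnegPath u ∧ ∀ j, 0 ≤ finalHeight u + heightAt v j := by
  refine ⟨fun h => ⟨fun k => ?_, fun j => heightAt_append_length_add u v j ▸ h _⟩, ?_⟩
  · rcases le_total k u.length with hk | hk
    · exact heightAt_append_of_le u v hk ▸ h k
    · rw [heightAt_of_length_le hk, ← heightAt_length, ← heightAt_append_of_le u v le_rfl]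
      exact h _
  · rintro ⟨hu, hv⟩ k
    rcases le_total k u.length with hk | hk
    · exact heightAt_append_of_le u v hk ▸ hu k
    · obtain ⟨j, rfl⟩ := Nat.exists_eq_add_of_le hk
      exact heightAt_append_length_add u v j ▸ hv j

lemma IsNonnegPath.of_append {u v : List Bool} (h : IsNonnegPath (u ++ v)) : IsNonnegPath u :=
  (isNonnegPath_append_iff.mp h).1

lemma isDyck_iff {p : List Bool} : IsDyck p ↔ IsNonnegPath p ∧ finalHeight p = 0 := by
  rw [IsDyck, heightAt_length, IsNonnegPath]

lemma IsDyck.finalHeight_eq_zero {p : List Bool} (hp : IsDyck p) : finalHeight p = 0 :=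
  (isDyck_iff.mp hp).2

lemma IsDyck.isNonnegPath {p : List Bool} (hp : IsDyck p) : IsNonnegPath p := hp.1

lemma isDyck_nil : IsDyck [] :=
  isDyck_iff.mpr ⟨fun k => by simp [heightAt_eq_finalHeight_take], rfl⟩

lemma IsDyck.length_eq_two_mul {p : List Bool} (hp : IsDyck p) :
    p.length = 2 * p.count true := by
  have h := hp.finalHeight_eq_zero
  have := p.count_true_add_count_false
  simp only [finalHeight] at h
  omega

lemma IsDyck.one_le_heightAt_elevate {w : List Bool} (hw : IsDyck w) {j : ℕ}
    (hj : j ≤ w.length) : 1 ≤ heightAt (elevate w) (j + 1) := by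
  rw [elevate, heightAt_cons_succ, heightAt_append_of_le _ _ hj]
  simpa using hw.isNonnegPath j

lemma IsDyck.isNonnegPath_elevate {w : List Bool} (hw : IsDyck w) :
    IsNonnegPath (elevate w) := by
  rintro (_ | j)
  · simp
  rcases le_or_gt j w.length with hj | hj
  · exact zero_le_one.trans (hw.one_le_heightAt_elevate hj)
  · rw [elevate, heightAt_cons_succ, heightAt_of_length_le (by simpa using hj)]
    simp [hw.finalHeight_eq_zero]

lemma IsDyck.append_elevate {a w : List Bool} (ha : IsDyck a) (hw : IsDyck w) :
    IsDyck (a ++ elevate w) := by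
  refine isDyck_iff.mpr ⟨isNonnegPath_append_iff.mpr ⟨ha.isNonnegPath, fun j => ?_⟩, ?_⟩
  · simpa [ha.finalHeight_eq_zero] using hw.isNonnegPath_elevate j
  · simp [ha.finalHeight_eq_zero, hw.finalHeight_eq_zero]

/-- Cutting a nonnegative path ending at height `h + 1` at its last visit to height `h`. -/
lemma IsNonnegPath.exists_eq_append_true_cons (h : ℕ) {q : List Bool} (hq : IsNonnegPath q)
    (hh : finalHeight q = h + 1) :
    ∃ a w, IsNonnegPath a ∧ finalHeight a = h ∧ IsDyck w ∧ q = a ++ true :: w := by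
  induction hn : q.length using Nat.strong_induction_on generalizing q h with
  | _ n ih =>
  obtain rfl | ⟨q, b, rfl⟩ := q.eq_nil_or_concat
  · simp at hh; omega
  simp only [concat_eq_append] at *
  cases b
  · -- the last step goes down from height `h + 2`: cut twice and re-join the two Dyck pieces
    obtain ⟨a', w', ha', hha', hw', rfl⟩ :=
      ih q.length (by simp [← hn]) (h + 1) hq.of_append (by simp at hh; omega) rfl
    obtain ⟨a, w, ha, hha, hw, rfl⟩ :=
      ih a'.length (by simp [← hn]) h ha' hha' rfl
    exact ⟨a, w ++ elevate w', ha, hha, hw.append_elevate hw', by simp [elevate]⟩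
  · exact ⟨q, [], hq.of_append, by simp at hh; omega, isDyck_nil, rfl⟩

lemma IsDyck.exists_eq_append_elevate {p : List Bool} (hp : IsDyck p) (hne : p ≠ []) :
    ∃ a w, IsDyck a ∧ IsDyck w ∧ p = a ++ elevate w := by
  obtain ⟨q, b, rfl⟩ := p.eq_nil_or_concat.resolve_left hne
  rw [concat_eq_append] at hp
  have hq := hp.isNonnegPath.of_append
  have hb := hp.finalHeight_eq_zero
  cases b
  · obtain ⟨a, w, ha, hha, hw, rfl⟩ := hq.exists_eq_append_true_cons 0 (by simp at hb; omega)
    exact ⟨a, w, isDyck_iff.mpr ⟨ha, by simpa using hha⟩, hw, by simp [elevate]⟩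
  · have := hq.finalHeight_nonneg
    simp at hb; omega

lemma length_le_of_append_elevate_eq {a w a' w' : List Bool} (ha : IsDyck a) (hw : IsDyck w)
    (ha' : IsDyck a') (h : a ++ elevate w = a' ++ elevate w') : a'.length ≤ a.length := by
  by_contra! hlt
  have hlen := congrArg length h
  simp only [elevate, length_append, length_cons, length_nil] at hlen
  obtain ⟨j, hj⟩ : ∃ j, a'.length = a.length + (j + 1) := ⟨a'.length - a.length - 1, by omega⟩
  have hpos : 1 ≤ heightAt (a ++ elevate w) a'.length := by
    rw [hj, heightAt_append_length_add, ha.finalHeight_eq_zero, zero_add]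
    exact hw.one_le_heightAt_elevate (by omega)
  rw [h, heightAt_append_of_le _ _ le_rfl, heightAt_length, ha'.finalHeight_eq_zero] at hpos
  omega

lemma append_elevate_inj {a w a' w' : List Bool} (ha : IsDyck a) (hw : IsDyck w)
    (ha' : IsDyck a') (hw' : IsDyck w') (h : a ++ elevate w = a' ++ elevate w') :
    a = a' ∧ w = w' := by
  have hlen := le_antisymm (length_le_of_append_elevate_eq ha' hw' ha h.symm)
    (length_le_of_append_elevate_eq ha hw ha' h)
  obtain ⟨rfl, hw⟩ := append_inj h hlen
  simpa [elevate] using hw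

def glue : List (List Bool) → List Bool
  | [] => []
  | a :: l => a ++ elevate (glue l)

lemma length_glue (l : List (List Bool)) :
    (glue l).length = (l.map length).sum + 2 * l.length := by
  induction l with
  | nil => rfl
  | cons a l ih => simp [glue, elevate, ih]; ring

lemma glue_eq_flatMap_append_replicate (l : List (List Bool)) :
    glue l = l.flatMap (· ++ [true]) ++ replicate l.length false := by
  induction l with
  | nil => rfl
  | cons a l ih => simp [glue, elevate, ih, replicate_succ']

lemma isDyck_glue {l : List (List Bool)} (hl : ∀ a ∈ l, IsDyck a) : IsDyck (glue l) := by
  induction l with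
  | nil => exact isDyck_nil
  | cons a l ih =>
    exact (hl a mem_cons_self).append_elevate (ih fun b hb => hl b (mem_cons_of_mem a hb))

lemma glue_injOn : Set.InjOn glue {l | ∀ a ∈ l, IsDyck a} := by
  intro l hl l' hl' h
  induction l generalizing l' with
  | nil => cases l' <;> simp_all [glue, elevate]
  | cons a l ih =>
    cases l' with
    | nil => simp [glue, elevate] at h
    | cons a' l' =>
      simp only [Set.mem_ofPred_eq, mem_cons, forall_eq_or_imp] at hl hl'
      obtain ⟨rfl, hg⟩ := append_elevate_inj hl.1 (isDyck_glue hl.2) hl'.1 (isDyck_glue hl'.2) h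
      rw [ih hl.2 hl'.2 hg]

lemma IsDyck.exists_glue_eq {p : List Bool} (hp : IsDyck p) :
    ∃ l, (∀ a ∈ l, IsDyck a) ∧ glue l = p := by
  induction hn : p.length using Nat.strong_induction_on generalizing p with
  | _ n ih =>
  rcases eq_or_ne p [] with rfl | hne
  · exact ⟨[], by simp, rfl⟩
  obtain ⟨a, w, ha, hw, rfl⟩ := hp.exists_eq_append_elevate hne
  obtain ⟨l, hl, rfl⟩ := ih w.length (by simp [← hn, elevate]; omega) hw rfl
  exact ⟨a :: l, by simpa using ⟨ha, hl⟩, rfl⟩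

def IsDownRunAt (p : List Bool) (i m : ℕ) : Prop :=
  (∀ j, j < m → p[i+j]? = some false) ∧ (i = 0 ∨ p[i-1]? = some true) ∧
    (p[i+m]? = some true ∨ i + m = p.length)

lemma hasDownRun_iff {p : List Bool} {m : ℕ} : HasDownRun p m ↔ ∃ i, IsDownRunAt p i m := Iff.rfl

lemma IsDownRunAt.add_le_length {p : List Bool} {i m : ℕ} (h : IsDownRunAt p i m) (hm : 1 ≤ m) :
    i + m ≤ p.length := by
  have := h.1 (m - 1) (by omega)
  have := (List.getElem?_eq_some_iff.mp this).1
  omega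

lemma getElem?_append_true_cons_length (a w : List Bool) :
    (a ++ true :: w)[a.length]? = some true := by
  simp

lemma getElem?_append_true_cons_length_add (a w : List Bool) (k : ℕ) :
    (a ++ true :: w)[a.length + 1 + k]? = w[k]? := by
  rw [getElem?_append_right (by omega)]
  simp [show a.length + 1 + k - a.length = k + 1 by omega]

lemma isDownRunAt_append_true_cons_iff_of_le {a w : List Bool} {i m : ℕ}
    (h : i + m ≤ a.length) : IsDownRunAt (a ++ true :: w) i m ↔ IsDownRunAt a i m := by
  have hleft : ∀ k < a.length, (a ++ true :: w)[k]? = a[k]? := fun k hk => getElem?_append_left hk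
  refine and_congr ?_ (and_congr ?_ ?_)
  · exact forall₂_congr fun j hj => by rw [hleft _ (by omega)]
  · rcases Nat.eq_zero_or_pos i with rfl | hi
    · simp
    · rw [hleft _ (by omega)]
  · rcases h.lt_or_eq with hlt | heq
    · simp only [hleft _ hlt, length_append, length_cons]
      exact or_congr_right ⟨fun _ => by omega, fun _ => by omega⟩
    · simp [heq]

lemma isDownRunAt_append_true_cons_length_add_iff {a w : List Bool} {i m : ℕ} :
    IsDownRunAt (a ++ true :: w) (a.length + 1 + i) m ↔ IsDownRunAt w i m := by
  refine and_congr ?_ (and_congr ?_ ?_)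
  · simp only [add_assoc, ← getElem?_append_true_cons_length_add a w]
  · rcases Nat.eq_zero_or_pos i with rfl | hi
    · simp
    · rw [show a.length + 1 + i - 1 = a.length + 1 + (i - 1) by omega,
        getElem?_append_true_cons_length_add]
      exact or_congr_left ⟨fun _ => by omega, fun _ => by omega⟩
  · rw [add_assoc, getElem?_append_true_cons_length_add]
    simp only [length_append, length_cons]
    exact or_congr_right ⟨fun _ => by omega, fun _ => by omega⟩

lemma IsDownRunAt.add_le_or_lt_of_append_true_cons {a w : List Bool} {i m : ℕ}
    (h : IsDownRunAt (a ++ true :: w) i m) : i + m ≤ a.length ∨ a.length < i := by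
  by_contra! hcon
  have := h.1 (a.length - i) (by omega)
  rw [show i + (a.length - i) = a.length by omega, getElem?_append_true_cons_length] at this
  simp at this

lemma hasDownRun_append_true_cons_iff {a w : List Bool} {m : ℕ} (hm : 1 ≤ m) :
    HasDownRun (a ++ true :: w) m ↔ HasDownRun a m ∨ HasDownRun w m := by
  simp only [hasDownRun_iff]
  constructor
  · rintro ⟨i, hi⟩
    rcases hi.add_le_or_lt_of_append_true_cons with hle | hlt
    · exact .inl ⟨i, (isDownRunAt_append_true_cons_iff_of_le hle).mp hi⟩
    · obtain ⟨k, rfl⟩ : ∃ k, i = a.length + 1 + k := ⟨i - a.length - 1, by omega⟩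
      exact .inr ⟨k, isDownRunAt_append_true_cons_length_add_iff.mp hi⟩
  · rintro (⟨i, hi⟩ | ⟨k, hk⟩)
    · exact ⟨i, (isDownRunAt_append_true_cons_iff_of_le (hi.add_le_length hm)).mpr hi⟩
    · exact ⟨_, isDownRunAt_append_true_cons_length_add_iff.mpr hk⟩

lemma hasDownRun_replicate_false_iff {n m : ℕ} : HasDownRun (replicate n false) m ↔ m = n := by
  constructor
  · rintro ⟨i, -, hstart, hend⟩
    simp only [getElem?_replicate, length_replicate] at hstart hend
    have hi : i = 0 := by split_ifs at hstart <;> simp_all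
    split_ifs at hend <;> simp_all
  · rintro rfl
    exact ⟨0, fun j hj => by simp [hj], .inl rfl, .inr (by simp)⟩

lemma hasDownRun_flatMap_append_iff (l : List (List Bool)) (v : List Bool) {m : ℕ} (hm : 1 ≤ m) :
    HasDownRun (l.flatMap (· ++ [true]) ++ v) m ↔ (∃ a ∈ l, HasDownRun a m) ∨ HasDownRun v m := by
  induction l with
  | nil => simp
  | cons a l ih =>
    rw [flatMap_cons, append_assoc, append_assoc, singleton_append,
      hasDownRun_append_true_cons_iff hm, ih]
    simp [or_assoc]

lemma hasDownRun_glue_iff (l : List (List Bool)) {m : ℕ} (hm : 1 ≤ m) :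
    HasDownRun (glue l) m ↔ (∃ a ∈ l, HasDownRun a m) ∨ m = l.length := by
  rw [glue_eq_flatMap_append_replicate, hasDownRun_flatMap_append_iff l _ hm,
    hasDownRun_replicate_false_iff]

def AvoidsDownRuns (F : Set ℕ) (p : List Bool) : Prop := ∀ m ∈ F, ¬ HasDownRun p m

lemma avoidsDownRuns_glue_iff {F : Set ℕ} (hF : 0 ∉ F) (l : List (List Bool)) :
    AvoidsDownRuns F (glue l) ↔ (∀ a ∈ l, AvoidsDownRuns F a) ∧ l.length ∉ F := by
  have hpos : ∀ m ∈ F, 1 ≤ m := fun m hm => Nat.one_le_iff_ne_zero.mpr (by rintro rfl; exact hF hm)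
  simp only [AvoidsDownRuns]
  constructor
  · intro h
    refine ⟨fun a ha m hm hrun => ?_, fun hl => ?_⟩
    · exact h m hm ((hasDownRun_glue_iff l (hpos m hm)).mpr (.inl ⟨a, ha, hrun⟩))
    · exact h _ hl ((hasDownRun_glue_iff l (hpos _ hl)).mpr (.inr rfl))
  · rintro ⟨ha, hl⟩ m hm hrun
    rcases (hasDownRun_glue_iff l (hpos m hm)).mp hrun with ⟨a, hal, hrun⟩ | rfl
    exacts [ha a hal m hm hrun, hl hm]

def dyckPaths (Q : List Bool → Prop) (n : ℕ) : Set (List Bool) :=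
  {p | p.length = 2 * n ∧ IsDyck p ∧ Q p}

def dyckTuples (Q : List Bool → Prop) (m j : ℕ) : Set (List (List Bool)) :=
  {l | l.length = m ∧ (∀ a ∈ l, IsDyck a ∧ Q a) ∧ (l.map length).sum = 2 * j}

lemma coeff_genFun (Q : List Bool → Prop) (n : ℕ) :
    PowerSeries.coeff n (genFun Q) = (dyckPaths Q n).ncard :=
  PowerSeries.coeff_mk _ _

lemma dyckPaths_finite (Q : List Bool → Prop) (n : ℕ) : (dyckPaths Q n).Finite :=
  (List.finite_length_eq Bool (2 * n)).subset fun _ hp => hp.1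

lemma dyckTuples_finite (Q : List Bool → Prop) (m j : ℕ) : (dyckTuples Q m j).Finite := by
  refine Set.Finite.of_finite_image ((List.finite_length_eq Bool (2 * j + 2 * m)).subset ?_)
    (glue_injOn.mono fun l hl a ha => (hl.2.1 a ha).1)
  rintro _ ⟨l, ⟨hlen, -, hsum⟩, rfl⟩
  simp [length_glue, hlen, hsum]

section

open Finset.HasAntidiagonal

lemma dyckTuples_succ (Q : List Bool → Prop) (m j : ℕ) :
    dyckTuples Q (m + 1) j = (fun x : List Bool × List (List Bool) => x.1 :: x.2) ''
      ⋃ x ∈ (↑(antidiagonal j) : Set (ℕ × ℕ)), dyckPaths Q x.1 ×ˢ dyckTuples Q m x.2 := by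
  ext l
  constructor
  · rintro ⟨hlen, hl, hsum⟩
    obtain ⟨a, t, rfl⟩ := exists_cons_of_length_eq_add_one hlen
    simp only [mem_cons, forall_eq_or_imp, map_cons, sum_cons] at hl hsum
    have ha := hl.1.1.length_eq_two_mul
    refine ⟨(a, t), Set.mem_biUnion (x := (a.count true, j - a.count true)) ?_ ?_, rfl⟩
    · rw [Finset.mem_coe, mem_antidiagonal]; omega
    · exact ⟨⟨ha, hl.1⟩, by simpa using hlen, hl.2, by dsimp only; omega⟩
  · rintro ⟨⟨a, t⟩, hmem, rfl⟩
    simp only [Set.mem_iUnion, Finset.mem_coe, mem_antidiagonal] at hmem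
    obtain ⟨⟨u, v⟩, huv, ⟨ha, hadyck⟩, ht, htQ, hsum⟩ := hmem
    refine ⟨by simp [ht], by simpa using ⟨hadyck, htQ⟩, ?_⟩
    simp only [map_cons, sum_cons]
    simp only at huv ha hsum
    omega

lemma coeff_genFun_pow (Q : List Bool → Prop) (m j : ℕ) :
    PowerSeries.coeff j (genFun Q ^ m) = (dyckTuples Q m j).ncard := by
  induction m generalizing j with
  | zero =>
    rcases eq_or_ne j 0 with rfl | hj
    · have : dyckTuples Q 0 0 = {[]} := by ext l; simp +contextual [dyckTuples]
      simp [this]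
    · have : dyckTuples Q 0 j = ∅ := by ext l; simp +contextual [dyckTuples, hj]
      simp [this, PowerSeries.coeff_one, hj]
  | succ m ih =>
    have hcons : Function.Injective fun x : List Bool × List (List Bool) => x.1 :: x.2 :=
      fun x y h => Prod.ext (cons.inj h).1 (cons.inj h).2
    have hdisj : (↑(antidiagonal j) : Set (ℕ × ℕ)).PairwiseDisjoint
        fun x => dyckPaths Q x.1 ×ˢ dyckTuples Q m x.2 := by
      rintro ⟨u, v⟩ huv ⟨u', v'⟩ huv' hne
      refine Set.disjoint_left.mpr fun ⟨a, t⟩ h h' => hne ?_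
      simp only [Finset.mem_coe, mem_antidiagonal, Set.mem_prod] at huv huv' h h'
      have : u = u' := by have := h.1.1.symm.trans h'.1.1; omega
      ext <;> simp only <;> omega
    rw [pow_succ', PowerSeries.coeff_mul, dyckTuples_succ, Set.ncard_image_of_injective _ hcons,
      (Finset.finite_toSet _).ncard_biUnion
        (fun x _ => (dyckPaths_finite Q x.1).prod (dyckTuples_finite Q m x.2)) hdisj,
      finsum_mem_coe_finset]
    exact Finset.sum_congr rfl fun x _ => by rw [coeff_genFun, ih, Set.ncard_prod]

end

lemma dyckPaths_avoidsDownRuns_eq {F : Set ℕ} [DecidablePred (· ∈ F)] (hF : 0 ∉ F) (n : ℕ) :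
    dyckPaths (AvoidsDownRuns F) n = glue '' ⋃ m ∈ (↑{m ∈ Finset.range (n + 1) | m ∉ F} : Set ℕ),
      dyckTuples (AvoidsDownRuns F) m (n - m) := by
  ext p
  simp only [Set.mem_image, Set.mem_iUnion, Finset.coe_filter, Finset.mem_range, exists_prop]
  constructor
  · rintro ⟨hlen, hp, havoid⟩
    obtain ⟨l, hl, rfl⟩ := hp.exists_glue_eq
    obtain ⟨havoid, hlF⟩ := (avoidsDownRuns_glue_iff hF l).mp havoid
    have := length_glue l
    exact ⟨l, ⟨l.length, ⟨by omega, hlF⟩, rfl, fun a ha => ⟨hl a ha, havoid a ha⟩, by omega⟩, rfl⟩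
  · rintro ⟨l, ⟨m, ⟨hm, hmF⟩, rfl, hl, hsum⟩, rfl⟩
    refine ⟨by rw [length_glue, hsum]; omega, isDyck_glue fun a ha => (hl a ha).1,
      (avoidsDownRuns_glue_iff hF l).mpr ⟨fun a ha => (hl a ha).2, hmF⟩⟩

/-- Coefficientwise form of `P = ∑_{m ∉ F} zᵐ Pᵐ`. -/
lemma coeff_genFun_avoidsDownRuns {F : Set ℕ} [DecidablePred (· ∈ F)] (hF : 0 ∉ F) (n : ℕ) :
    PowerSeries.coeff n (genFun (AvoidsDownRuns F)) =
      ∑ m ∈ Finset.range (n + 1) with m ∉ F,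
        PowerSeries.coeff (n - m) (genFun (AvoidsDownRuns F) ^ m) := by
  have hinj : Set.InjOn glue (⋃ m ∈ (↑{m ∈ Finset.range (n + 1) | m ∉ F} : Set ℕ),
      dyckTuples (AvoidsDownRuns F) m (n - m)) := glue_injOn.mono fun l hl => by
    simp only [Set.mem_iUnion] at hl
    obtain ⟨m, -, -, hl, -⟩ := hl
    exact fun a ha => (hl a ha).1
  have hdisj : (↑{m ∈ Finset.range (n + 1) | m ∉ F} : Set ℕ).PairwiseDisjoint
      fun m => dyckTuples (AvoidsDownRuns F) m (n - m) :=
    fun m _ m' _ hne => Set.disjoint_left.mpr fun l hl hl' => hne (hl.1.symm.trans hl'.1)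
  rw [coeff_genFun, dyckPaths_avoidsDownRuns_eq hF, hinj.ncard_image,
    (Finset.finite_toSet _).ncard_biUnion (fun m _ => dyckTuples_finite _ m _) hdisj,
    finsum_mem_coe_finset]
  exact Finset.sum_congr rfl fun m _ => (coeff_genFun_pow _ m _).symm

section

open PowerSeries

variable {R : Type*} [CommSemiring R]

lemma coeff_mul_eq_of_coeff_eq (F : R⟦X⟧) {G H : R⟦X⟧} {n : ℕ}
    (h : ∀ j ≤ n, coeff j G = coeff j H) : coeff n (F * G) = coeff n (F * H) := by
  simp only [coeff_mul]
  exact Finset.sum_congr rfl fun x hx => by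
    rw [h x.2 (Finset.HasAntidiagonal.antidiagonal.snd_le hx)]

lemma sum_filter_range_add_pow (s : ℕ → Prop) [DecidablePred s] {A : ℕ} {K : Finset ℕ}
    (hK : ∀ k, k ∈ K ↔ k < A ∧ s k) (hshift : ∀ m, s (A + m) ↔ s m) (G : R) (N : ℕ) :
    ∑ m ∈ Finset.range (A + N + 1) with s m, G ^ m =
      ∑ k ∈ K, G ^ k + G ^ A * ∑ m ∈ Finset.range (N + 1) with s m, G ^ m := by
  have hK' : K = {k ∈ Finset.range A | s k} := by ext k; simp [hK]
  rw [hK', Finset.sum_filter, Finset.sum_filter, Finset.sum_filter, add_assoc,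
    Finset.sum_range_add, Finset.mul_sum]
  simp only [hshift, pow_add, mul_ite, mul_zero]

lemma coeff_sum_filter_range_X_mul_pow {s : ℕ → Prop} [DecidablePred s] {P : R⟦X⟧}
    (hP : ∀ n, coeff n P = ∑ m ∈ Finset.range (n + 1) with s m, coeff (n - m) (P ^ m))
    {n N : ℕ} (h : n ≤ N) :
    coeff n (∑ m ∈ Finset.range (N + 1) with s m, (X * P) ^ m) = coeff n P := by
  rw [map_sum, hP]
  calc ∑ m ∈ Finset.range (N + 1) with s m, coeff n ((X * P) ^ m)
      = ∑ m ∈ Finset.range (n + 1) with s m, coeff n ((X * P) ^ m) := by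
        refine (Finset.sum_subset (Finset.filter_subset_filter _ ?_) fun m hm hm' => ?_).symm
        · exact Finset.range_subset_range.mpr (by omega)
        · simp only [Finset.mem_filter, Finset.mem_range, not_and] at hm hm'
          rw [mul_pow, coeff_X_pow_mul', if_neg (by have := mt hm' (not_not.mpr hm.2); omega)]
    _ = ∑ m ∈ Finset.range (n + 1) with s m, coeff (n - m) (P ^ m) :=
        Finset.sum_congr rfl fun m hm => by
          rw [mul_pow, coeff_X_pow_mul', if_pos (by simp at hm; omega)]

theorem eq_sum_X_pow_mul_pow_add_of_coeff_eq {s : ℕ → Prop} [DecidablePred s] {A : ℕ}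
    {K : Finset ℕ} (hK : ∀ k, k ∈ K ↔ k < A ∧ s k) (hshift : ∀ m, s (A + m) ↔ s m) {P : R⟦X⟧}
    (hP : ∀ n, coeff n P = ∑ m ∈ Finset.range (n + 1) with s m, coeff (n - m) (P ^ m)) :
    P = ∑ k ∈ K, X ^ k * P ^ k + X ^ A * P ^ (A + 1) := by
  ext n
  calc coeff n P = coeff n (∑ m ∈ Finset.range (A + n + 1) with s m, (X * P) ^ m) :=
        (coeff_sum_filter_range_X_mul_pow hP (by omega)).symm
    _ = coeff n (∑ k ∈ K, (X * P) ^ k) + coeff n ((X * P) ^ A * P) := by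
        rw [sum_filter_range_add_pow s hK hshift, map_add,
          coeff_mul_eq_of_coeff_eq _ fun j hj => coeff_sum_filter_range_X_mul_pow hP hj]
    _ = _ := by simp only [mul_pow, pow_succ, mul_assoc, map_add]

end

lemma mem_range_mul_add_iff_of_lt {A B k : ℕ} (hk : k < A) :
    k ∈ Set.range (fun r => A * r + B) ↔ k = B := by
  refine ⟨fun ⟨r, hr⟩ => ?_, fun h => ⟨0, by simp [h]⟩⟩
  rcases r with _ | r
  · simpa using hr.symm
  · dsimp only at hr; rw [mul_add_one] at hr; omega

lemma add_mem_range_mul_add_iff {A B m : ℕ} (hBA : B < A) :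
    A + m ∈ Set.range (fun r => A * r + B) ↔ m ∈ Set.range (fun r => A * r + B) := by
  refine ⟨fun ⟨r, hr⟩ => ?_, fun ⟨r, hr⟩ => ⟨r + 1, by dsimp only at hr ⊢; rw [mul_add_one]; omega⟩⟩
  rcases r with _ | r
  · simp at hr; omega
  · exact ⟨r, by dsimp only at hr ⊢; rw [mul_add_one] at hr; omega⟩

/-- For `1 ≤ B < A` and `P` the generating function of Dyck paths whose down-run lengths all
avoid `{A·r + B : r ≥ 0}`: `P = ∑_{0 ≤ k < A, k ≠ B} z^k P^k + z^A P^(A+1)`. -/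
theorem stmt11 (A B : ℕ) (hB : 1 ≤ B) (hBA : B < A) :
    let P := genFun (fun p => ∀ r : ℕ, ¬ HasDownRun p (A * r + B))
    P = (∑ k ∈ (Finset.range A).erase B, PowerSeries.X ^ k * P ^ k) +
      PowerSeries.X ^ A * P ^ (A + 1) := by
  intro P
  classical
  set F := Set.range fun r => A * r + B
  have hP : P = genFun (AvoidsDownRuns F) :=
    congrArg genFun (funext fun p => by simp [AvoidsDownRuns, F])
  rw [hP]
  refine eq_sum_X_pow_mul_pow_add_of_coeff_eq (s := (· ∉ F)) (fun k => ?_)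
    (fun m => not_congr (add_mem_range_mul_add_iff hBA)) (coeff_genFun_avoidsDownRuns ?_)
  · rw [Finset.mem_erase, Finset.mem_range]
    exact ⟨fun ⟨hkB, hk⟩ => ⟨hk, (mem_range_mul_add_iff_of_lt hk).not.mpr hkB⟩,
      fun ⟨hk, hkF⟩ => ⟨(mem_range_mul_add_iff_of_lt hk).not.mp hkF, hk⟩⟩
  · rintro ⟨r, hr⟩
    dsimp only at hr; omega
end

section
/- Let r ≥ 1 be an integer, and let P be the generating function of the set of Dyck paths none of whose up-run lengths and none of whose down-run lengths lies in {1, 2, …, r}. Then, as formal power series, P + z·P = 1 + z^{r+1}·P + z·P^2. -/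
namespace List

lemma getElem?_append_length_add {α : Type*} (x y : List α) (k : ℕ) :
    (x ++ y)[x.length + k]? = y[k]? := by
  rw [getElem?_append_right (by omega), Nat.add_sub_cancel_left]

lemma exists_eq_replicate_append {α : Type*} (a : α) (l : List α) :
    ∃ k t, l = replicate k a ++ t ∧ a ∉ t.head? := by
  induction l with
  | nil => exact ⟨0, [], rfl, by simp⟩
  | cons c l ih =>
    by_cases hc : c = a
    · obtain ⟨k, t, rfl, ht⟩ := ih
      exact ⟨k + 1, t, by simp [hc, replicate_succ], ht⟩
    · exact ⟨0, c :: l, rfl, by simpa [eq_comm] using hc⟩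

lemma exists_eq_append_replicate {α : Type*} (a : α) (l : List α) :
    ∃ t k, l = t ++ replicate k a ∧ a ∉ t.getLast? := by
  obtain ⟨k, t, h, ht⟩ := exists_eq_replicate_append a l.reverse
  refine ⟨t.reverse, k, ?_, by simpa using ht⟩
  rw [← reverse_reverse l, h, reverse_append, reverse_replicate]

lemma exists_eq_replicate_true_append_replicate_false {l : List Bool}
    (h₀ : l.head? = some true) (h₁ : l.getLast? = some false) :
    ∃ a y d, l = replicate (a + 1) true ++ y ++ replicate (d + 1) false ∧
      true ∉ y.head? ∧ false ∉ y.getLast? := by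
  obtain ⟨k, x, rfl, hx⟩ := exists_eq_replicate_append true l
  obtain ⟨y, e, rfl, hy⟩ := exists_eq_append_replicate false x
  obtain ⟨a, rfl⟩ : ∃ a, k = a + 1 :=
    Nat.exists_eq_add_one.2 (Nat.pos_of_ne_zero (by rintro rfl; exact hx (by simpa using h₀)))
  obtain ⟨d, rfl⟩ : ∃ d, e = d + 1 := Nat.exists_eq_add_one.2 (Nat.pos_of_ne_zero (by
    rintro rfl
    cases hlast : y.getLast? <;> simp_all [getLast?_append, getLast?_replicate]))
  refine ⟨a, y, d, by simp, fun h => hx ?_, hy⟩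
  simp_all [head?_append]

end List

/-- `HasUpRun p m` and `HasDownRun p m` unfold to `HasRun p true m` and `HasRun p false m`. -/
def HasRun (p : List Bool) (b : Bool) (m : ℕ) : Prop :=
  ∃ i, (∀ j, j < m → p[i + j]? = some b) ∧ (i = 0 ∨ p[i - 1]? = some !b) ∧
    (p[i + m]? = some !b ∨ i + m = p.length)

def NoShortRuns (r : ℕ) (p : List Bool) : Prop :=
  ∀ b m, 1 ≤ m → m ≤ r → ¬ HasRun p b m

lemma noShortRuns_iff (r : ℕ) (p : List Bool) :
    NoShortRuns r p ↔ ∀ m : ℕ, 1 ≤ m → m ≤ r → ¬ HasUpRun p m ∧ ¬ HasDownRun p m := by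
  simp only [NoShortRuns, Bool.forall_bool]
  exact ⟨fun h m h1 h2 => ⟨h.2 m h1 h2, h.1 m h1 h2⟩, fun h => ⟨fun m h1 h2 => (h m h1 h2).2,
    fun m h1 h2 => (h m h1 h2).1⟩⟩

namespace HasRun

variable {x y : List Bool} {b : Bool} {m : ℕ}

lemma append_left (h : HasRun x b m) (hm : m ≠ 0) (hxy : ∀ c ∈ x.getLast?, c ∉ y.head?) :
    HasRun (x ++ y) b m := by
  obtain ⟨i, hrun, hl, hr⟩ := h
  have hlt : i + m ≤ x.length := by
    rcases hr with hr | hr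
    · exact (List.getElem?_eq_some_iff.1 hr).1.le.trans' (by omega)
    · omega
  refine ⟨i, fun j hj => ?_, ?_, ?_⟩
  · rw [List.getElem?_append_left (by omega)]; exact hrun j hj
  · rcases hl with hl | hl
    · exact .inl hl
    · rw [List.getElem?_append_left (by omega)]; exact .inr hl
  · rcases hr with hr | hr
    · rw [List.getElem?_append_left (List.getElem?_eq_some_iff.1 hr).1]; exact .inl hr
    · rcases y with _ | ⟨c, y⟩
      · exact .inr (by simpa using hr)
      · have hlast : x.getLast? = some b := by
          rw [List.getLast?_eq_getElem?, show x.length - 1 = i + (m - 1) by omega]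
          exact hrun _ (by omega)
        have hc : c ≠ b := fun hcb => hxy b hlast (by simp [hcb])
        left
        rw [hr, ← add_zero x.length, List.getElem?_append_length_add]
        simpa using Bool.eq_not_of_ne hc

lemma append_right (h : HasRun y b m) (hm : m ≠ 0) (hxy : ∀ c ∈ x.getLast?, c ∉ y.head?) :
    HasRun (x ++ y) b m := by
  obtain ⟨i, hrun, hl, hr⟩ := h
  refine ⟨x.length + i, fun j hj => ?_, ?_, ?_⟩
  · rw [add_assoc, List.getElem?_append_length_add]; exact hrun j hj
  · rcases Nat.eq_zero_or_pos i with rfl | hi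
    · rcases List.eq_nil_or_concat x with rfl | ⟨x, c, rfl⟩
      · exact .inl rfl
      · have hc : c ≠ b := fun hcb => hxy c (by simp)
          (by simpa [hcb, List.head?_eq_getElem?] using hrun 0 (by omega))
        right
        simpa using Bool.eq_not_of_ne hc
    · right
      rw [show x.length + i - 1 = x.length + (i - 1) by omega, List.getElem?_append_length_add]
      exact hl.resolve_left (by omega)
  · rcases hr with hr | hr
    · left; rw [add_assoc, List.getElem?_append_length_add]; exact hr
    · right; simp [← hr]; omega

lemma of_append (h : HasRun (x ++ y) b m) (hm : m ≠ 0) (hxy : ∀ c ∈ x.getLast?, c ∉ y.head?) :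
    HasRun x b m ∨ HasRun y b m := by
  obtain ⟨i, hrun, hl, hr⟩ := h
  rcases le_or_gt (i + m) x.length with hin | hout
  · refine .inl ⟨i, fun j hj => ?_, ?_, ?_⟩
    · rw [← List.getElem?_append_left (l₂ := y) (by omega)]; exact hrun j hj
    · rcases hl with hl | hl
      · exact .inl hl
      · rw [← List.getElem?_append_left (l₂ := y) (by omega)]; exact .inr hl
    · rcases hin.lt_or_eq with hlt | heq
      · rcases hr with hr | hr
        · rw [← List.getElem?_append_left (l₂ := y) hlt]; exact .inl hr
        · simp at hr; omega
      · exact .inr heq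
  rcases le_or_gt x.length i with hge | hlt
  · obtain ⟨k, rfl⟩ := Nat.exists_eq_add_of_le hge
    refine .inr ⟨k, fun j hj => ?_, ?_, ?_⟩
    · rw [← List.getElem?_append_length_add x, ← add_assoc]; exact hrun j hj
    · rcases hl with hl | hl
      · exact .inl (by omega)
      · rcases Nat.eq_zero_or_pos k with hk | hk
        · exact .inl hk
        · rw [show x.length + k - 1 = x.length + (k - 1) by omega,
            List.getElem?_append_length_add] at hl
          exact .inr hl
    · rcases hr with hr | hr
      · rw [add_assoc, List.getElem?_append_length_add] at hr; exact .inl hr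
      · simp at hr; exact .inr (by omega)
  · -- the run straddles the junction, so `x` ends and `y` starts with `b`
    exfalso
    have hlast := hrun (x.length - 1 - i) (by omega)
    have hhead := hrun (x.length - i) (by omega)
    rw [show i + (x.length - 1 - i) = x.length - 1 by omega,
      List.getElem?_append_left (by omega), ← List.getLast?_eq_getElem?] at hlast
    rw [show i + (x.length - i) = x.length + 0 by omega, List.getElem?_append_length_add,
      ← List.head?_eq_getElem?] at hhead
    exact hxy b hlast hhead

end HasRun

lemma hasRun_append_iff {x y : List Bool} {b : Bool} {m : ℕ} (hm : m ≠ 0)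
    (hxy : ∀ c ∈ x.getLast?, c ∉ y.head?) :
    HasRun (x ++ y) b m ↔ HasRun x b m ∨ HasRun y b m :=
  ⟨fun h => h.of_append hm hxy, fun h => h.elim (·.append_left hm hxy) (·.append_right hm hxy)⟩

lemma hasRun_replicate_iff {k m : ℕ} {b c : Bool} (hm : m ≠ 0) :
    HasRun (List.replicate k c) b m ↔ b = c ∧ m = k := by
  constructor
  · rintro ⟨i, hrun, hl, hr⟩
    obtain ⟨hik, rfl⟩ : i < k ∧ c = b := by simpa [List.getElem?_replicate] using hrun 0 (by omega)
    obtain rfl : i = 0 := by simpa [List.getElem?_replicate] using hl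
    simp [List.getElem?_replicate] at hr
    exact ⟨rfl, hr⟩
  · rintro ⟨rfl, rfl⟩
    exact ⟨0, fun j hj => by simp [hj], .inl rfl, .inr (by simp)⟩

lemma noShortRuns_append_iff {r : ℕ} {x y : List Bool} (hxy : ∀ c ∈ x.getLast?, c ∉ y.head?) :
    NoShortRuns r (x ++ y) ↔ NoShortRuns r x ∧ NoShortRuns r y := by
  refine ⟨fun h => ⟨fun b m h₁ h₂ hx => h b m h₁ h₂ ?_, fun b m h₁ h₂ hy => h b m h₁ h₂ ?_⟩,
    fun ⟨hx, hy⟩ b m h₁ h₂ h => ?_⟩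
  · exact (hasRun_append_iff (by omega) hxy).2 (.inl hx)
  · exact (hasRun_append_iff (by omega) hxy).2 (.inr hy)
  · exact ((hasRun_append_iff (by omega) hxy).1 h).elim (hx b m h₁ h₂) (hy b m h₁ h₂)

lemma noShortRuns_replicate_iff {r k : ℕ} {c : Bool} :
    NoShortRuns r (List.replicate k c) ↔ k = 0 ∨ r < k := by
  refine ⟨fun h => ?_, fun hk b m h₁ h₂ h => ?_⟩
  · by_contra! hk
    exact h c k (by omega) hk.2 ((hasRun_replicate_iff (by omega)).2 ⟨rfl, rfl⟩)
  · obtain ⟨-, rfl⟩ := (hasRun_replicate_iff (by omega)).1 h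
    omega

lemma noShortRuns_nil (r : ℕ) : NoShortRuns r [] :=
  noShortRuns_replicate_iff (k := 0) (c := true) |>.2 (.inl rfl)

lemma noShortRuns_replicate_append_iff {r k : ℕ} {c : Bool} {y : List Bool} (hy : c ∉ y.head?) :
    NoShortRuns r (List.replicate k c ++ y) ↔ (k = 0 ∨ r < k) ∧ NoShortRuns r y := by
  rw [noShortRuns_append_iff, noShortRuns_replicate_iff]
  intro c' hc'
  obtain ⟨-, rfl⟩ : k ≠ 0 ∧ c = c' := by simpa [List.getLast?_replicate] using hc'
  exact hy

lemma noShortRuns_append_replicate_iff {r k : ℕ} {c : Bool} {y : List Bool} (hy : c ∉ y.getLast?) :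
    NoShortRuns r (y ++ List.replicate k c) ↔ NoShortRuns r y ∧ (k = 0 ∨ r < k) := by
  rw [noShortRuns_append_iff, noShortRuns_replicate_iff]
  intro c' hc' h
  obtain ⟨-, rfl⟩ : k ≠ 0 ∧ c = c' := by simpa [List.head?_replicate] using h
  exact hy hc'

lemma noShortRuns_replicate_append_replicate_iff {r a d : ℕ} {y : List Bool}
    (hy₀ : true ∉ y.head?) (hy₁ : false ∉ y.getLast?) :
    NoShortRuns r (List.replicate a true ++ y ++ List.replicate d false) ↔
      (a = 0 ∨ r < a) ∧ NoShortRuns r y ∧ (d = 0 ∨ r < d) := by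
  rw [noShortRuns_append_replicate_iff, noShortRuns_replicate_append_iff hy₀, and_assoc]
  cases hy : y.getLast? <;> simp_all [List.getLast?_append, List.getLast?_replicate]

namespace DyckStep

def equivBool : DyckStep ≃ Bool where
  toFun
    | U => true
    | D => false
  invFun b := if b then U else D
  left_inv s := by cases s <;> rfl
  right_inv b := by cases b <;> rfl

lemma count_true_map_equivBool (l : List DyckStep) : (l.map equivBool).count true = l.count U :=
  List.count_map_of_injective l _ equivBool.injective U

lemma count_false_map_equivBool (l : List DyckStep) : (l.map equivBool).count false = l.count D :=
  List.count_map_of_injective l _ equivBool.injective D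

lemma heightAt_map_equivBool (l : List DyckStep) (k : ℕ) :
    heightAt (l.map equivBool) k = ((l.take k).count U : ℤ) - (l.take k).count D := by
  rw [heightAt, ← List.map_take, count_true_map_equivBool, count_false_map_equivBool]

end DyckStep

namespace DyckWord

open DyckStep

def toBools (p : DyckWord) : List Bool := p.toList.map equivBool

lemma toBools_injective : Function.Injective toBools :=
  fun _ _ h => DyckWord.ext (List.map_injective_iff.2 equivBool.injective h)

@[simp] lemma toBools_zero : (0 : DyckWord).toBools = [] := rfl

lemma toBools_add (p q : DyckWord) : (p + q).toBools = p.toBools ++ q.toBools :=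
  List.map_append ..

lemma toBools_nest (p : DyckWord) : p.nest.toBools = true :: p.toBools ++ [false] := by
  simp [toBools, nest, equivBool]

lemma length_toBools (p : DyckWord) : p.toBools.length = 2 * p.semilength := by
  simp [toBools]

lemma isDyck_toBools (p : DyckWord) : IsDyck p.toBools := by
  refine ⟨fun k => ?_, ?_⟩
  · have := p.count_D_le_count_U k
    rw [toBools, heightAt_map_equivBool]
    omega
  · rw [toBools, List.length_map, heightAt_map_equivBool, List.take_length, p.count_U_eq_count_D,
      sub_self]

lemma exists_toBools_eq {l : List Bool} (hl : IsDyck l) : ∃ p : DyckWord, p.toBools = l := by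
  set w := l.map equivBool.symm
  have hw : w.map equivBool = l := by simp [w]
  rw [← hw] at hl
  refine ⟨⟨w, ?_, fun i => ?_⟩, hw⟩
  · have := hl.2
    rw [List.length_map, heightAt_map_equivBool, List.take_length] at this
    omega
  · have := hl.1 i
    rw [heightAt_map_equivBool] at this
    omega

lemma count_true_toBools_eq_count_false (p : DyckWord) : p.toBools.count true = p.toBools.count false := by
  rw [toBools, count_true_map_equivBool, count_false_map_equivBool, p.count_U_eq_count_D]

lemma count_false_le_count_true_of_prefix {p : DyckWord} {s : List Bool} (hs : s <+: p.toBools) :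
    s.count false ≤ s.count true := by
  rw [List.prefix_iff_eq_take, toBools, ← List.map_take] at hs
  rw [hs, count_true_map_equivBool, count_false_map_equivBool]
  exact p.count_D_le_count_U _

lemma head?_toBools {p : DyckWord} (hp : p ≠ 0) : p.toBools.head? = some true := by
  have h := toList_ne_nil.2 hp
  rw [toBools, List.head?_map, List.head?_eq_some_head h, head_eq_U]
  rfl

lemma getLast?_toBools {p : DyckWord} (hp : p ≠ 0) : p.toBools.getLast? = some false := by
  have h := toList_ne_nil.2 hp
  rw [toBools, List.getLast?_map, List.getLast?_eq_some_getLast h, getLast_eq_D]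
  rfl

section GeneratingFunction

open PowerSeries Finset.HasAntidiagonal

lemma semilength_eq_zero_iff {p : DyckWord} : p.semilength = 0 ↔ p = 0 := by
  rw [← toList_eq_nil, ← List.length_eq_zero_iff, ← two_mul_semilength_eq_length]
  omega

noncomputable def semilengthGF (Q : DyckWord → Prop) : PowerSeries ℕ :=
  PowerSeries.mk fun n => {p : DyckWord | p.semilength = n ∧ Q p}.ncard

lemma finite_setOf_semilength_eq (n : ℕ) (Q : DyckWord → Prop) :
    {p : DyckWord | p.semilength = n ∧ Q p}.Finite :=
  (Set.finite_coe_iff.1 (inferInstanceAs (Finite {p : DyckWord // p.semilength = n}))).subset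
    fun _ hp => hp.1

lemma semilengthGF_or {P R : DyckWord → Prop} (h : ∀ p, P p → ¬ R p) :
    semilengthGF (fun p => P p ∨ R p) = semilengthGF P + semilengthGF R := by
  ext n
  rw [map_add, semilengthGF, semilengthGF, semilengthGF, coeff_mk, coeff_mk, coeff_mk,
    ← Set.ncard_union_eq _ (finite_setOf_semilength_eq n P) (finite_setOf_semilength_eq n R)]
  · congr 1
    ext p
    simp [and_or_left]
  · rw [Set.disjoint_left]
    rintro p ⟨-, hP⟩ ⟨-, hR⟩
    exact h p hP hR

lemma semilengthGF_singleton (x : DyckWord) : semilengthGF (· = x) = X ^ x.semilength := by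
  ext n
  rw [semilengthGF, coeff_mk, coeff_X_pow]
  split_ifs with h
  · rw [← Set.ncard_singleton x]
    congr 1
    ext p
    simp only [Set.mem_ofPred_eq, Set.mem_singleton_iff, and_iff_right_iff_imp]
    rintro rfl
    exact h.symm
  · rw [Set.ncard_eq_zero (finite_setOf_semilength_eq n _)]
    ext p
    simp only [Set.mem_ofPred_eq, Set.mem_empty_iff_false, iff_false, not_and]
    rintro rfl rfl
    exact h rfl

lemma nest_add_injective : Function.Injective fun x : DyckWord × DyckWord => x.1.nest + x.2 := by
  rintro ⟨p, q⟩ ⟨p', q'⟩ h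
  have h₁ := congrArg insidePart h
  have h₂ := congrArg outsidePart h
  simp only [insidePart_add nest_ne_zero, insidePart_nest, outsidePart_add nest_ne_zero,
    outsidePart_nest, zero_add] at h₁ h₂
  rw [h₁, h₂]

lemma setOf_semilength_succ_eq_image {Q Q₁ Q₂ : DyckWord → Prop}
    (h : ∀ p q, Q (p.nest + q) ↔ Q₁ p ∧ Q₂ q) (n : ℕ) :
    {p | p.semilength = n + 1 ∧ Q p} = (fun x : DyckWord × DyckWord => x.1.nest + x.2) ''
      ⋃ ij ∈ (antidiagonal n : Set (ℕ × ℕ)),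
        {p | p.semilength = ij.1 ∧ Q₁ p} ×ˢ {q | q.semilength = ij.2 ∧ Q₂ q} := by
  ext w
  simp only [Set.mem_ofPred_eq, Set.mem_image, Set.mem_iUnion, Set.mem_prod, Finset.mem_coe,
    mem_antidiagonal, Prod.exists, exists_prop]
  constructor
  · rintro ⟨hw, hQ⟩
    have hw₀ : w ≠ 0 := by rintro rfl; simp at hw
    have hsum := semilength_insidePart_add_semilength_outsidePart_add_one hw₀
    rw [← nest_insidePart_add_outsidePart hw₀, h] at hQ
    exact ⟨_, _, ⟨_, _, by omega, ⟨rfl, hQ.1⟩, rfl, hQ.2⟩, nest_insidePart_add_outsidePart hw₀⟩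
  · rintro ⟨p, q, ⟨i, j, hij, ⟨rfl, hp⟩, rfl, hq⟩, rfl⟩
    exact ⟨by simp [← hij, add_right_comm], (h p q).2 ⟨hp, hq⟩⟩

theorem semilengthGF_eq_one_add_X_mul {Q Q₁ Q₂ : DyckWord → Prop} (h₀ : Q 0)
    (h : ∀ p q, Q (p.nest + q) ↔ Q₁ p ∧ Q₂ q) :
    semilengthGF Q = 1 + X * semilengthGF Q₁ * semilengthGF Q₂ := by
  ext (_ | n)
  · have : {p | p.semilength = 0 ∧ Q p} = {0} := by
      ext p
      simp only [Set.mem_ofPred_eq, Set.mem_singleton_iff, semilength_eq_zero_iff,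
        and_iff_left_iff_imp]
      rintro rfl
      exact h₀
    simp [semilengthGF, this]
  · have hdisj : (antidiagonal n : Set (ℕ × ℕ)).PairwiseDisjoint fun ij =>
        {p | p.semilength = ij.1 ∧ Q₁ p} ×ˢ {q | q.semilength = ij.2 ∧ Q₂ q} := by
      rintro ij - kl - hne
      rw [Function.onFun, Set.disjoint_left]
      rintro ⟨p, q⟩ ⟨⟨hp, -⟩, hq, -⟩ ⟨⟨hp', -⟩, hq', -⟩
      exact hne (Prod.ext (hp.symm.trans hp') (hq.symm.trans hq'))
    rw [semilengthGF, coeff_mk, setOf_semilength_succ_eq_image h,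
      Set.ncard_image_of_injective _ nest_add_injective,
      Set.Finite.ncard_biUnion (Finset.finite_toSet _)
        (fun _ _ => (finite_setOf_semilength_eq _ _).prod (finite_setOf_semilength_eq _ _)) hdisj,
      finsum_mem_coe_finset, map_add, coeff_one, if_neg n.succ_ne_zero, zero_add, mul_assoc,
      coeff_succ_X_mul, coeff_mul]
    simp [semilengthGF, Set.ncard_prod]

end GeneratingFunction

section ShortRuns

open List

def pyramid (n : ℕ) : DyckWord := nest^[n] 0

lemma toBools_pyramid (n : ℕ) :
    (pyramid n).toBools = replicate n true ++ replicate n false := by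
  induction n with
  | zero => rfl
  | succ n ih =>
    rw [pyramid, Function.iterate_succ_apply', ← pyramid, toBools_nest, ih, replicate_succ,
      replicate_succ']
    simp

lemma semilength_pyramid (n : ℕ) : (pyramid n).semilength = n := by
  induction n with
  | zero => rfl
  | succ n ih => rw [pyramid, Function.iterate_succ_apply', ← pyramid, semilength_nest, ih]

lemma nest_pyramid (n : ℕ) : (pyramid n).nest = pyramid (n + 1) :=
  (Function.iterate_succ_apply' nest n 0).symm

lemma nest_zero : (0 : DyckWord).nest = pyramid 1 := rfl

lemma noShortRuns_toBools_pyramid_iff {r n : ℕ} :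
    NoShortRuns r (pyramid n).toBools ↔ n = 0 ∨ r < n := by
  rw [toBools_pyramid, ← append_nil (replicate n true),
    noShortRuns_replicate_append_replicate_iff (by simp) (by simp)]
  simp [noShortRuns_nil]

lemma false_notMem_head?_toBools (p : DyckWord) : false ∉ p.toBools.head? := by
  rcases eq_or_ne p 0 with rfl | hp
  · simp
  · simp [head?_toBools hp]

lemma noShortRuns_nest_add_iff (r : ℕ) (p q : DyckWord) :
    NoShortRuns r (p.nest + q).toBools ↔
      NoShortRuns r p.nest.toBools ∧ NoShortRuns r q.toBools := by
  rw [toBools_add]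
  refine noShortRuns_append_iff fun c hc => ?_
  obtain rfl : false = c := by simpa [getLast?_toBools nest_ne_zero] using hc
  exact false_notMem_head?_toBools q

lemma not_noShortRuns_of_toBools_eq_replicate_append {p : DyckWord} {a : ℕ} {y t : List Bool}
    (h : p.toBools = replicate a true ++ y ++ t) (hy : y ≠ []) (hy₀ : true ∉ y.head?) :
    ¬ NoShortRuns a y := by
  intro hya
  obtain ⟨e, y', rfl, hy'⟩ := exists_eq_replicate_append false y
  have he : e ≠ 0 := by
    rintro rfl
    cases y' with
    | nil => exact hy rfl
    | cons c y' => cases c <;> simp_all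
  have hae : a < e := by
    have := ((noShortRuns_replicate_append_iff hy').1 hya).1
    omega
  -- the prefix `U^a D^e` of the path would end below zero
  have := count_false_le_count_true_of_prefix (p := p)
    (s := replicate a true ++ replicate e false) ⟨y' ++ t, by simp [h]⟩
  simp [count_replicate] at this
  omega

lemma not_noShortRuns_of_toBools_eq_append_replicate {p : DyckWord} {d : ℕ} {s y : List Bool}
    (h : p.toBools = s ++ y ++ replicate d false) (hy : y ≠ []) (hy₁ : false ∉ y.getLast?) :
    ¬ NoShortRuns d y := by
  intro hyd
  obtain ⟨y', e, rfl, hy'⟩ := exists_eq_append_replicate true y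
  have he : e ≠ 0 := by
    rintro rfl
    rcases eq_nil_or_concat y' with rfl | ⟨y', c, rfl⟩
    · exact hy rfl
    · cases c <;> simp_all
  have hde : d < e := by
    have := ((noShortRuns_append_replicate_iff hy').1 hyd).2
    omega
  -- the suffix `U^e D^d` rises by `e - d > 0`, so the prefix before it ends below zero
  have hprefix := count_false_le_count_true_of_prefix (p := p)
    (s := s ++ y') ⟨replicate e true ++ replicate d false, by simp [h]⟩
  have hbalance := count_true_toBools_eq_count_false p
  simp [h, count_replicate] at hbalance
  simp only [count_append] at hprefix
  omega

lemma eq_pyramid_of_toBools_eq {r a d : ℕ} {q : DyckWord} {y : List Bool}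
    (hq : q.toBools = replicate (a + 1) true ++ y ++ replicate (d + 1) false)
    (hy₀ : true ∉ y.head?) (hy₁ : false ∉ y.getLast?) (hy : NoShortRuns r y)
    (hr : r = a + 1 ∨ r = d + 1) : q = pyramid r := by
  have hnil : y = [] := by
    by_contra hne
    rcases hr with rfl | rfl
    · exact not_noShortRuns_of_toBools_eq_replicate_append hq hne hy₀ hy
    · exact not_noShortRuns_of_toBools_eq_append_replicate hq hne hy₁ hy
  subst hnil
  obtain rfl : a = d := by
    have := count_true_toBools_eq_count_false q
    simp [hq, count_replicate] at this
    omega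
  obtain rfl : r = a + 1 := by omega
  exact toBools_injective (by rw [hq, toBools_pyramid, append_nil])

lemma noShortRuns_nest_iff (r : ℕ) (q : DyckWord) :
    NoShortRuns r q.nest.toBools ↔ (q ≠ 0 ∧ NoShortRuns r q.toBools) ∨ q = pyramid r := by
  by_cases hpyr : q = pyramid r
  · subst hpyr
    simp only [or_true, iff_true]
    rw [nest_pyramid, noShortRuns_toBools_pyramid_iff]
    omega
  rcases eq_or_ne q 0 with rfl | hq
  · have hr : r ≠ 0 := by rintro rfl; exact hpyr rfl
    rw [nest_zero, noShortRuns_toBools_pyramid_iff]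
    simp only [hpyr, ne_eq, not_true_eq_false, false_and, or_false, iff_false]
    omega
  simp only [hpyr, or_false, hq, ne_eq, not_false_eq_true, true_and]
  obtain ⟨a, y, d, hq', hy₀, hy₁⟩ :=
    exists_eq_replicate_true_append_replicate_false (head?_toBools hq) (getLast?_toBools hq)
  have hnest : q.nest.toBools = replicate (a + 2) true ++ y ++ replicate (d + 2) false := by
    rw [toBools_nest, hq', replicate_succ' (n := d + 1)]
    simp [replicate_succ]
  rw [hnest, hq', noShortRuns_replicate_append_replicate_iff hy₀ hy₁,
    noShortRuns_replicate_append_replicate_iff hy₀ hy₁]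
  refine ⟨fun ⟨ha, hy, hd⟩ => ?_, fun ⟨ha, hy, hd⟩ => ⟨by omega, hy, by omega⟩⟩
  have : r ≠ a + 1 ∧ r ≠ d + 1 :=
    not_or.1 fun h => hpyr (eq_pyramid_of_toBools_eq hq' hy₀ hy₁ hy h)
  exact ⟨by omega, hy, by omega⟩

lemma semilengthGF_nest_add_one {r : ℕ} (hr : 0 < r) :
    semilengthGF (fun p => NoShortRuns r p.nest.toBools) + 1 =
      semilengthGF (fun p => NoShortRuns r p.toBools) + PowerSeries.X ^ r := by
  have hdisj₀ : ∀ p : DyckWord, NoShortRuns r p.nest.toBools → p ≠ 0 := by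
    rintro p hp rfl
    rw [nest_zero, noShortRuns_toBools_pyramid_iff] at hp
    omega
  have hdisj₁ : ∀ p, NoShortRuns r p.toBools → p ≠ pyramid r := by
    rintro p hp rfl
    rw [noShortRuns_toBools_pyramid_iff] at hp
    omega
  calc _ = semilengthGF (fun p => NoShortRuns r p.nest.toBools ∨ p = 0) := by
        rw [semilengthGF_or hdisj₀, semilengthGF_singleton, semilength_zero, pow_zero]
    _ = semilengthGF (fun p => NoShortRuns r p.toBools ∨ p = pyramid r) := by
        congr 1
        ext p
        rw [noShortRuns_nest_iff]
        rcases eq_or_ne p 0 with rfl | hp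
        · simp [noShortRuns_nil]
        · simp [hp]
    _ = _ := by rw [semilengthGF_or hdisj₁, semilengthGF_singleton, semilength_pyramid]

end ShortRuns

end DyckWord

lemma genFun_eq_semilengthGF (Q : List Bool → Prop) :
    genFun Q = DyckWord.semilengthGF fun p => Q p.toBools := by
  ext n
  rw [genFun, DyckWord.semilengthGF, PowerSeries.coeff_mk, PowerSeries.coeff_mk,
    ← Set.ncard_image_of_injective _ DyckWord.toBools_injective]
  congr 1
  ext l
  constructor
  · rintro ⟨hlen, hl, hQ⟩
    obtain ⟨p, rfl⟩ := DyckWord.exists_toBools_eq hl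
    exact ⟨p, ⟨by rw [DyckWord.length_toBools] at hlen; omega, hQ⟩, rfl⟩
  · rintro ⟨p, ⟨rfl, hQ⟩, rfl⟩
    exact ⟨DyckWord.length_toBools p, DyckWord.isDyck_toBools p, hQ⟩

/-- For `r ≥ 1` and `P` the generating function of Dyck paths with no up-run and no
down-run of a length in `{1, …, r}`: `P + zP = 1 + z^(r+1) P + z P²`. -/
theorem stmt13 (r : ℕ) (hr : 1 ≤ r) :
    let P := genFun (fun p => ∀ m : ℕ, 1 ≤ m → m ≤ r → ¬ HasUpRun p m ∧ ¬ HasDownRun p m)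
    P + PowerSeries.X * P =
      1 + PowerSeries.X ^ (r + 1) * P + PowerSeries.X * P ^ 2 := by
  intro P
  set C := DyckWord.semilengthGF fun p => NoShortRuns r p.toBools
  set B := DyckWord.semilengthGF fun p => NoShortRuns r p.nest.toBools
  have hP : P = C := by
    simp only [P, C, genFun_eq_semilengthGF, noShortRuns_iff]
  have hC : C = 1 + PowerSeries.X * B * C :=
    DyckWord.semilengthGF_eq_one_add_X_mul (noShortRuns_nil r) (DyckWord.noShortRuns_nest_add_iff r)
  have hB : B + 1 = C + PowerSeries.X ^ r := DyckWord.semilengthGF_nest_add_one hr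
  rw [hP]
  calc C + PowerSeries.X * C = 1 + PowerSeries.X * (B + 1) * C := by nth_rw 1 [hC]; ring
    _ = 1 + PowerSeries.X * (C + PowerSeries.X ^ r) * C := by rw [hB]
    _ = 1 + PowerSeries.X ^ (r + 1) * C + PowerSeries.X * C ^ 2 := by ring
end

section
/- Let r and k be positive integers with k ≤ r, and let P be the generating function of the set of Dyck paths none of whose up-run lengths lies in {1, …, r} and none of whose down-run lengths lies in {k+1, …, r}. Then, as formal power series, P + z·P + z^{r+1}·P^{r+1−k} = 1 + z·P^2 + z^{r+1}·P + z^{r+1}·P^{r+1}. -/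
/-!
Cut a nonempty path at its first peak: it is `U^u D^d t` with `t` a path from height
`h + u - d`. This gives a recurrence for the generating functions `T_h` of paths from height `h`
that do not start with a down-step. Writing `T_h = [h = 0] + Q_h`, the recurrence forces
`Q_(h+1) = P Q_h` for `P = T_0`, by induction on the number of known coefficients, since every
step of the recurrence carries a factor `z^u` with `u ≥ 1`. Hence `Q_h = P^h Q_0`. Splitting off
the shortest allowed first up-run `U^(r+1)` gives `Q_0 = z^(r+1) D + z P Q_0`, where `D` counts
paths from height `r + 1` that begin with an allowed down-run, and a telescoping geometric sum
gives `D + P^(r+1-k) = P^(r+1) + P`. Since `P = 1 + Q_0`, eliminating `Q_0` and `D` yields the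
identity.
-/

open PowerSeries PowerSeries.WithPiTopology

namespace PowerSeries

variable {R : Type*} [CommSemiring R]

theorem coeff_eq_of_trunc_eq {f g : R⟦X⟧} {N : ℕ} (h : trunc N f = trunc N g) {m : ℕ}
    (hm : m < N) : coeff m f = coeff m g := by
  simpa [coeff_trunc, hm] using congrArg (Polynomial.coeff · m) h

theorem eq_of_forall_trunc_eq {f g : R⟦X⟧} (h : ∀ N, trunc N f = trunc N g) : f = g :=
  ext fun n => coeff_eq_of_trunc_eq (h (n + 1)) n.lt_succ_self

theorem trunc_succ_X_pow_mul_congr {f g : R⟦X⟧} {N a : ℕ} (ha : 0 < a)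
    (h : trunc N f = trunc N g) : trunc (N + 1) (X ^ a * f) = trunc (N + 1) (X ^ a * g) := by
  ext m
  simp only [coeff_trunc, coeff_X_pow_mul']
  split_ifs with hm ham
  exacts [coeff_eq_of_trunc_eq h (by omega), rfl, rfl]

variable [TopologicalSpace R]

theorem hasSum_coeff_X_pow_mul (f : ℕ → R⟦X⟧) (n : ℕ) :
    HasSum (fun u => coeff n (X ^ u * f u)) (∑ u ∈ Finset.range (n + 1), coeff (n - u) (f u)) := by
  rw [← Finset.sum_congr rfl fun u (hu : u ∈ Finset.range (n + 1)) =>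
    show coeff n (X ^ u * f u) = _ by
      rw [coeff_X_pow_mul', if_pos (Nat.lt_succ_iff.1 (Finset.mem_range.1 hu))]]
  exact hasSum_sum_of_ne_finset_zero fun u hu => by
    rw [coeff_X_pow_mul', if_neg (by simpa [Nat.lt_succ_iff] using hu)]

theorem summable_X_pow_mul (f : ℕ → R⟦X⟧) : Summable fun u => X ^ u * f u :=
  (summable_iff_summable_coeff R).2 fun n => (hasSum_coeff_X_pow_mul f n).summable

variable [T2Space R]

theorem coeff_tsum_X_pow_mul (f : ℕ → R⟦X⟧) (n : ℕ) :
    coeff n (∑' u, X ^ u * f u) = ∑ u ∈ Finset.range (n + 1), coeff (n - u) (f u) :=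
  ((hasSum_iff_hasSum_coeff R).1 (summable_X_pow_mul f).hasSum n).unique
    (hasSum_coeff_X_pow_mul f n)

theorem trunc_tsum_X_pow_mul_congr {f g : ℕ → R⟦X⟧} {N : ℕ}
    (hfg : ∀ u, trunc N (f u) = trunc N (g u)) :
    trunc N (∑' u, X ^ u * f u) = trunc N (∑' u, X ^ u * g u) := by
  ext m
  simp only [coeff_trunc, coeff_tsum_X_pow_mul]
  split_ifs with hm
  · exact Finset.sum_congr rfl fun u _ => coeff_eq_of_trunc_eq (hfg u) (by omega)
  · rfl

variable [IsTopologicalSemiring R]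

theorem mul_tsum_X_pow_mul (g : R⟦X⟧) (f : ℕ → R⟦X⟧) :
    g * ∑' u, X ^ u * f u = ∑' u, X ^ u * (g * f u) := by
  simp_rw [← (summable_X_pow_mul f).tsum_mul_left, mul_left_comm]

theorem tsum_X_pow_mul_eq_add (f : ℕ → R⟦X⟧) :
    ∑' u, X ^ u * f u = f 0 + X * ∑' u, X ^ u * f (u + 1) := by
  have hsucc : (fun u => X ^ (u + 1) * f (u + 1)) = fun u => X ^ u * (X * f (u + 1)) := by
    ext1 u
    ring
  rw [tsum_eq_zero_add' (hsucc ▸ summable_X_pow_mul _), hsucc, mul_tsum_X_pow_mul, pow_zero,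
    one_mul]

theorem tsum_X_pow_mul_ite_le (a : ℕ) (f : ℕ → R⟦X⟧) :
    ∑' u, X ^ u * (if a ≤ u then f u else 0) = X ^ a * ∑' j, X ^ j * f (a + j) := by
  induction a generalizing f with
  | zero => simp
  | succ a ih =>
    rw [tsum_X_pow_mul_eq_add, if_neg (by omega), zero_add]
    simp only [Nat.add_le_add_iff_right]
    rw [ih, pow_succ', mul_assoc]
    simp only [add_right_comm a 1]

end PowerSeries

theorem Finset.sum_Ico_pow_mul_add_pow {R : Type*} [CommSemiring R] (x : R) {b c : ℕ}
    (hbc : b ≤ c) : ∑ e ∈ Finset.Ico b c, (x + 1) ^ e * x + (x + 1) ^ b = (x + 1) ^ c := by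
  calc ∑ e ∈ Finset.Ico b c, (x + 1) ^ e * x + (x + 1) ^ b
      = (x + 1) ^ b * ((∑ i ∈ Finset.range (c - b), (x + 1) ^ i) * x + 1) := by
        simp only [Finset.sum_Ico_eq_sum_range, pow_add, Finset.sum_mul, Finset.mul_sum, mul_add,
          mul_one, mul_assoc]
    _ = (x + 1) ^ c := by rw [geom_sum_mul_add, ← pow_add, Nat.add_sub_cancel' hbc]

namespace RunRestrictedDyck

section Lists

variable {b : Bool}

theorem getElem?_eq_some_not {l : List Bool} {k : ℕ} (hk : k < l.length) (hb : l[k]? ≠ some b) :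
    l[k]? = some !b := by
  rw [List.getElem?_eq_getElem hk] at hb ⊢
  generalize l[k] = c at hb ⊢
  cases b <;> cases c <;> simp_all

theorem head?_replicate_append {u : ℕ} (hu : 0 < u) (xs : List Bool) :
    (List.replicate u b ++ xs).head? = some b := by
  obtain ⟨u, rfl⟩ := Nat.exists_eq_add_of_lt hu
  simp [List.replicate_succ]

theorem getLast?_replicate_of_pos {u : ℕ} (hu : 0 < u) :
    (List.replicate u b).getLast? = some b := by
  simp [List.getLast?_replicate, hu.ne']

theorem exists_eq_replicate_append (b : Bool) :
    ∀ {p : List Bool}, p.head? = some b →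
      ∃ u rest, 0 < u ∧ p = List.replicate u b ++ rest ∧ rest.head? ≠ some b
  | [], hp => by simp at hp
  | c :: q, hp => by
    obtain rfl : c = b := by simpa using hp
    by_cases hq : q.head? = some c
    · obtain ⟨u, rest, -, rfl, hrest⟩ := exists_eq_replicate_append c hq
      exact ⟨u + 1, rest, u.succ_pos, rfl, hrest⟩
    · exact ⟨1, q, one_pos, rfl, hq⟩

theorem replicate_append_inj {u u' : ℕ} {xs ys : List Bool}
    (hxs : xs.head? ≠ some b) (hys : ys.head? ≠ some b)
    (h : List.replicate u b ++ xs = List.replicate u' b ++ ys) : u = u' ∧ xs = ys := by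
  induction u generalizing u' with
  | zero => cases u' with
    | zero => simpa using h
    | succ u' => simp [List.replicate_succ] at h; simp [h] at hxs
  | succ u ih => cases u' with
    | zero => simp [List.replicate_succ] at h; simp [← h] at hys
    | succ u' => simp [List.replicate_succ] at h; simpa using ih h

end Lists

def HasRun (b : Bool) (p : List Bool) (m : ℕ) : Prop :=
  ∃ i, (∀ j < m, p[i + j]? = some b) ∧ (i = 0 ∨ p[i - 1]? = some !b) ∧
    (p[i + m]? = some !b ∨ i + m = p.length)

theorem hasUpRun_iff {p : List Bool} {m : ℕ} : HasUpRun p m ↔ HasRun true p m := Iff.rfl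

theorem hasDownRun_iff {p : List Bool} {m : ℕ} : HasDownRun p m ↔ HasRun false p m := Iff.rfl

section HasRun

variable {b : Bool} {m : ℕ} {xs ys : List Bool}

theorem add_le_length_of_run {p : List Bool} {i : ℕ} (hm : 0 < m)
    (hrun : ∀ j < m, p[i + j]? = some b) : i + m ≤ p.length := by
  obtain ⟨hlt, -⟩ := List.getElem?_eq_some_iff.1 (hrun (m - 1) (by omega))
  omega

theorem not_hasRun_nil (hm : 0 < m) : ¬ HasRun b [] m := by
  rintro ⟨i, hrun, -⟩
  have := add_le_length_of_run hm hrun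
  simp at this
  omega

theorem hasRun_replicate_self {u : ℕ} : HasRun b (List.replicate u b) m ↔ m = u := by
  constructor
  · rintro ⟨i, -, hleft, hright⟩
    have hr : i + m = u := by
      rcases hright with h | h
      · cases b <;> simp [List.getElem?_replicate] at h
      · simpa using h
    have hl : i = 0 := by
      rcases hleft with h | h
      · exact h
      · cases b <;> simp [List.getElem?_replicate] at h
    omega
  · rintro rfl
    exact ⟨0, fun j hj => by simp [hj], Or.inl rfl, Or.inr (by simp)⟩

theorem not_hasRun_replicate_of_ne {c : Bool} {u : ℕ} (hcb : c ≠ b) (hm : 0 < m) :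
    ¬ HasRun b (List.replicate u c) m := by
  rintro ⟨i, hrun, -, -⟩
  have h := hrun 0 hm
  simp [List.getElem?_replicate] at h
  exact hcb h.2

theorem hasRun_append_of_left (hxy : xs.getLast? ≠ ys.head?) (hm : 0 < m)
    (h : HasRun b xs m) : HasRun b (xs ++ ys) m := by
  rw [List.getLast?_eq_getElem?, List.head?_eq_getElem?] at hxy
  obtain ⟨i, hrun, hleft, hright⟩ := h
  have hend := add_le_length_of_run hm hrun
  refine ⟨i, fun j hj => ?_, ?_, ?_⟩
  · rw [List.getElem?_append_left (by omega)]
    exact hrun j hj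
  · rwa [List.getElem?_append_left (by omega)]
  · rcases hright with h | h
    · left
      rwa [List.getElem?_append_left (List.getElem?_eq_some_iff.1 h).1]
    · by_cases hys : ys = []
      · right; simp [hys, h]
      · left
        rw [List.getElem?_append_right (by omega), h, Nat.sub_self]
        rw [show xs.length - 1 = i + (m - 1) by omega, hrun (m - 1) (by omega)] at hxy
        exact getElem?_eq_some_not (List.length_pos_of_ne_nil hys) (Ne.symm hxy)

theorem hasRun_append_of_right (hxy : xs.getLast? ≠ ys.head?) (hm : 0 < m)
    (h : HasRun b ys m) : HasRun b (xs ++ ys) m := by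
  rw [List.getLast?_eq_getElem?, List.head?_eq_getElem?] at hxy
  obtain ⟨i, hrun, hleft, hright⟩ := h
  have hend := add_le_length_of_run hm hrun
  refine ⟨xs.length + i, fun j hj => ?_, ?_, ?_⟩
  · rw [add_assoc, List.getElem?_append_right (by omega), Nat.add_sub_cancel_left]
    exact hrun j hj
  · by_cases hi : i = 0
    · subst hi
      by_cases hxs : xs = []
      · left; simp [hxs]
      · right
        have hx := List.length_pos_of_ne_nil hxs
        rw [add_zero, List.getElem?_append_left (by omega)]
        rw [← zero_add 0, hrun 0 hm] at hxy
        exact getElem?_eq_some_not (by omega) hxy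
    · right
      rw [List.getElem?_append_right (by omega),
        show xs.length + i - 1 - xs.length = i - 1 by omega]
      exact hleft.resolve_left hi
  · rcases hright with h | h
    · left
      rwa [add_assoc, List.getElem?_append_right (by omega), Nat.add_sub_cancel_left]
    · right; simp; omega

/-- A run of `xs ++ ys` cannot cross the junction, where the letters differ. -/
theorem HasRun.of_append (hxy : xs.getLast? ≠ ys.head?) (hm : 0 < m)
    (h : HasRun b (xs ++ ys) m) : HasRun b xs m ∨ HasRun b ys m := by
  rw [List.getLast?_eq_getElem?, List.head?_eq_getElem?] at hxy
  obtain ⟨i, hrun, hleft, hright⟩ := h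
  have hend := add_le_length_of_run hm hrun
  rw [List.length_append] at hend
  by_cases hi : i < xs.length
  · have hix : i + m ≤ xs.length := by
      by_contra hlt
      have h1 := hrun (xs.length - 1 - i) (by omega)
      have h2 := hrun (xs.length - i) (by omega)
      rw [List.getElem?_append_left (by omega), show i + (xs.length - 1 - i) = xs.length - 1 by
        omega] at h1
      rw [List.getElem?_append_right (by omega), show i + (xs.length - i) - xs.length = 0 by
        omega] at h2
      exact hxy (h1.trans h2.symm)
    refine .inl ⟨i, fun j hj => ?_, ?_, ?_⟩
    · rw [← List.getElem?_append_left (l₂ := ys) (by omega)]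
      exact hrun j hj
    · rwa [List.getElem?_append_left (by omega)] at hleft
    · rcases Nat.lt_or_ge (i + m) xs.length with h | h
      · rw [List.getElem?_append_left h] at hright
        exact hright.imp_right fun h' => by simp at h'; omega
      · right; omega
  · refine .inr ⟨i - xs.length, fun j hj => ?_, ?_, ?_⟩
    · rw [show i - xs.length + j = i + j - xs.length by omega, ← List.getElem?_append_right
        (by omega)]
      exact hrun j hj
    · by_cases h0 : i = xs.length
      · left; omega
      · rw [List.getElem?_append_right (by omega),
          show i - 1 - xs.length = i - xs.length - 1 by omega, or_iff_right (by omega)] at hleft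
        exact .inr hleft
    · rwa [List.getElem?_append_right (by omega), List.length_append,
        show i + m - xs.length = i - xs.length + m by omega,
        show i + m = xs.length + ys.length ↔ i - xs.length + m = ys.length by omega] at hright

theorem hasRun_append (hxy : xs.getLast? ≠ ys.head?) (hm : 0 < m) :
    HasRun b (xs ++ ys) m ↔ HasRun b xs m ∨ HasRun b ys m :=
  ⟨HasRun.of_append hxy hm, Or.rec (hasRun_append_of_left hxy hm)
    (hasRun_append_of_right hxy hm)⟩

end HasRun

section Height

theorem heightAt_length (p : List Bool) :
    heightAt p p.length = (p.count true : ℤ) - p.count false := by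
  simp [heightAt]

theorem heightAt_append_of_le {xs ys : List Bool} {i : ℕ} (h : i ≤ xs.length) :
    heightAt (xs ++ ys) i = heightAt xs i := by
  simp [heightAt, List.take_append, Nat.sub_eq_zero_of_le h]

theorem heightAt_append_length_add (xs ys : List Bool) (i : ℕ) :
    heightAt (xs ++ ys) (xs.length + i) = heightAt xs xs.length + heightAt ys i := by
  simp only [heightAt, List.take_append, List.take_length, Nat.add_sub_cancel_left,
    List.take_of_length_le (Nat.le_add_right _ _), List.count_append]
  push_cast
  ring

theorem heightAt_replicate_true (u i : ℕ) : heightAt (List.replicate u true) i = min i u := by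
  simp [heightAt, List.take_replicate, List.count_replicate]

theorem heightAt_replicate_false (d i : ℕ) :
    heightAt (List.replicate d false) i = -(min i d : ℕ) := by
  simp [heightAt, List.take_replicate, List.count_replicate]

end Height

def IsPathFrom (h : ℤ) (p : List Bool) : Prop :=
  (∀ i, 0 ≤ h + heightAt p i) ∧ h + heightAt p p.length = 0

section IsPathFrom

variable {h : ℤ} {xs ys : List Bool}

theorem isPathFrom_nil : IsPathFrom h [] ↔ h = 0 := by
  simp +contextual [IsPathFrom, heightAt]

theorem isPathFrom_append : IsPathFrom h (xs ++ ys) ↔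
    (∀ i ≤ xs.length, 0 ≤ h + heightAt xs i) ∧ IsPathFrom (h + heightAt xs xs.length) ys := by
  constructor
  · rintro ⟨hnonneg, hend⟩
    refine ⟨fun i hi => ?_, fun i => ?_, ?_⟩
    · simpa [heightAt_append_of_le hi] using hnonneg i
    · simpa [heightAt_append_length_add, add_assoc] using hnonneg (xs.length + i)
    · simpa [heightAt_append_length_add, add_assoc] using hend
  · rintro ⟨hxs, hnonneg, hend⟩
    refine ⟨fun i => ?_, ?_⟩
    · rcases le_or_gt i xs.length with hi | hi
      · simpa [heightAt_append_of_le hi] using hxs i hi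
      · obtain ⟨j, rfl⟩ := Nat.exists_eq_add_of_le hi.le
        simpa [heightAt_append_length_add, add_assoc] using hnonneg j
    · simpa [heightAt_append_length_add, add_assoc] using hend

theorem isPathFrom_replicate_true_append {u : ℕ} (hh : 0 ≤ h) :
    IsPathFrom h (List.replicate u true ++ ys) ↔ IsPathFrom (h + u) ys := by
  simp only [isPathFrom_append, List.length_replicate, heightAt_replicate_true, min_self,
    and_iff_right_iff_imp]
  intro _ i _
  positivity

theorem isPathFrom_replicate_false_append {d : ℕ} :
    IsPathFrom h (List.replicate d false ++ ys) ↔ d ≤ h ∧ IsPathFrom (h - d) ys := by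
  simp only [isPathFrom_append, List.length_replicate, heightAt_replicate_false, min_self,
    ← sub_eq_add_neg]
  refine and_congr_left fun _ => ⟨fun hd => by simpa using hd d le_rfl, fun hd i hi => ?_⟩
  rw [min_eq_left hi]
  omega

theorem isDyck_iff_isPathFrom {p : List Bool} : IsDyck p ↔ IsPathFrom 0 p := by
  simp [IsDyck, IsPathFrom]

theorem IsPathFrom.head?_ne_false {p : List Bool} (hp : IsPathFrom 0 p) :
    p.head? ≠ some false := by
  intro hhead
  cases p with
  | nil => simp at hhead
  | cons b q =>
    obtain rfl : b = false := by simpa using hhead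
    have := hp.1 1
    simp [heightAt] at this

theorem IsPathFrom.length_eq_two_mul_iff {p : List Bool} (hp : IsPathFrom 0 p) {n : ℕ} :
    p.length = 2 * n ↔ p.count true = n := by
  have hend := hp.2
  rw [heightAt_length] at hend
  have := List.count_true_add_count_false p
  omega

end IsPathFrom

def upDown (u d : ℕ) (t : List Bool) : List Bool :=
  List.replicate u true ++ (List.replicate d false ++ t)

section UpDown

variable {u d : ℕ} {t : List Bool}

theorem head?_upDown (hu : 0 < u) : (upDown u d t).head? = some true :=
  head?_replicate_append hu _

theorem count_true_upDown : (upDown u d t).count true = u + t.count true := by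
  simp [upDown, List.count_replicate]

theorem upDown_inj {u' d' : ℕ} {t' : List Bool} (hd : 0 < d) (hd' : 0 < d')
    (ht : t.head? ≠ some false) (ht' : t'.head? ≠ some false)
    (h : upDown u d t = upDown u' d' t') : u = u' ∧ d = d' ∧ t = t' := by
  obtain ⟨rfl, hrest⟩ := replicate_append_inj (by simp [head?_replicate_append hd])
    (by simp [head?_replicate_append hd']) h
  obtain ⟨rfl, rfl⟩ := replicate_append_inj ht ht' hrest
  exact ⟨rfl, rfl, rfl⟩

theorem isPathFrom_upDown {h : ℤ} (hh : 0 ≤ h) :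
    IsPathFrom h (upDown u d t) ↔ d ≤ h + u ∧ IsPathFrom (h + u - d) t := by
  rw [upDown, isPathFrom_replicate_true_append hh, isPathFrom_replicate_false_append]

theorem hasRun_true_upDown {m : ℕ} (hu : 0 < u) (hd : 0 < d) (ht : t.head? ≠ some false)
    (hm : 0 < m) : HasRun true (upDown u d t) m ↔ m = u ∨ HasRun true t m := by
  rw [upDown, hasRun_append (by simp [getLast?_replicate_of_pos hu, head?_replicate_append hd]) hm,
    hasRun_replicate_self, hasRun_append (by simpa [getLast?_replicate_of_pos hd] using ht.symm) hm,
    iff_false_intro (not_hasRun_replicate_of_ne (u := d) (by decide) hm), false_or]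

theorem hasRun_false_upDown {m : ℕ} (hu : 0 < u) (hd : 0 < d) (ht : t.head? ≠ some false)
    (hm : 0 < m) : HasRun false (upDown u d t) m ↔ m = d ∨ HasRun false t m := by
  rw [upDown, hasRun_append (by simp [getLast?_replicate_of_pos hu, head?_replicate_append hd]) hm,
    hasRun_append (by simpa [getLast?_replicate_of_pos hd] using ht.symm) hm,
    hasRun_replicate_self, iff_false_intro (not_hasRun_replicate_of_ne (u := u) (by decide) hm),
    false_or]

theorem upDown_injective (u d : ℕ) : Function.Injective (upDown u d) :=
  fun _ _ h => List.append_cancel_left (List.append_cancel_left h)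

end UpDown

section PathsFrom

-- `0 < m`: `HasUpRun p 0` holds whenever `p` is empty or ends with a down-step.
def RunsIn (A B : Set ℕ) (p : List Bool) : Prop :=
  (∀ m, 0 < m → HasUpRun p m → m ∈ A) ∧ (∀ m, 0 < m → HasDownRun p m → m ∈ B)

/-- The paths counted by `T_h`. Excluding a first down-step makes `D^d` a whole run in
`upDown u d t`. -/
def pathsFrom (A B : Set ℕ) (h n : ℕ) : Set (List Bool) :=
  {p | IsPathFrom h p ∧ RunsIn A B p ∧ p.head? ≠ some false ∧ p.count true = n}

variable {A B : Set ℕ} {u d h n : ℕ} {t : List Bool}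

theorem runsIn_upDown (hu : 0 < u) (hd : 0 < d) (ht : t.head? ≠ some false) :
    RunsIn A B (upDown u d t) ↔ u ∈ A ∧ d ∈ B ∧ RunsIn A B t := by
  have hup {m} (hm : 0 < m) := hasRun_true_upDown hu hd ht hm
  have hdown {m} (hm : 0 < m) := hasRun_false_upDown hu hd ht hm
  simp only [RunsIn, hasUpRun_iff, hasDownRun_iff]
  constructor
  · rintro ⟨hA, hB⟩
    exact ⟨hA u hu ((hup hu).2 (.inl rfl)), hB d hd ((hdown hd).2 (.inl rfl)),
      fun m hm hr => hA m hm ((hup hm).2 (.inr hr)),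
      fun m hm hr => hB m hm ((hdown hm).2 (.inr hr))⟩
  · rintro ⟨hu', hd', hA, hB⟩
    refine ⟨fun m hm hr => ?_, fun m hm hr => ?_⟩
    · rcases (hup hm).1 hr with rfl | hr
      exacts [hu', hA m hm hr]
    · rcases (hdown hm).1 hr with rfl | hr
      exacts [hd', hB m hm hr]

theorem upDown_mem_pathsFrom (hu : 0 < u) (hd : 0 < d) (ht : t.head? ≠ some false) :
    upDown u d t ∈ pathsFrom A B h n ↔
      u ∈ A ∧ d ∈ B ∧ d ≤ h + u ∧ u ≤ n ∧ t ∈ pathsFrom A B (h + u - d) (n - u) := by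
  simp only [pathsFrom, Set.mem_ofPred_eq, isPathFrom_upDown (Int.natCast_nonneg h),
    runsIn_upDown hu hd ht, head?_upDown hu, count_true_upDown, ne_eq, Option.some.injEq,
    Bool.true_eq_false, not_false_eq_true, true_and, ht]
  constructor
  · rintro ⟨⟨hdh, hpath⟩, ⟨hA, hB, hruns⟩, hcount⟩
    refine ⟨hA, hB, by omega, by omega, ?_, hruns, by omega⟩
    rwa [Nat.cast_sub (by omega), Nat.cast_add]
  · rintro ⟨hA, hB, hdh, hun, hpath, hruns, hcount⟩
    refine ⟨⟨by omega, ?_⟩, ⟨hA, hB, hruns⟩, by omega⟩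
    rwa [Nat.cast_sub hdh, Nat.cast_add] at hpath

theorem nil_mem_pathsFrom : [] ∈ pathsFrom A B h n ↔ h = 0 ∧ n = 0 := by
  simp +contextual [pathsFrom, isPathFrom_nil, RunsIn, hasUpRun_iff, hasDownRun_iff,
    not_hasRun_nil, eq_comm]

theorem exists_eq_upDown {p : List Bool} (hp : p ∈ pathsFrom A B h n) (hne : p ≠ []) :
    ∃ u d t, 0 < u ∧ 0 < d ∧ t.head? ≠ some false ∧ p = upDown u d t := by
  obtain ⟨hpath, -, hhead, -⟩ := hp
  have hp : p.head? = some true := by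
    cases p with
    | nil => exact absurd rfl hne
    | cons b q => cases b <;> simp_all
  obtain ⟨u, rest, hu, rfl, hrest⟩ := exists_eq_replicate_append true hp
  have hrest' : rest.head? = some false := by
    cases rest with
    | nil =>
      rw [isPathFrom_replicate_true_append (Int.natCast_nonneg h), isPathFrom_nil] at hpath
      omega
    | cons b q => cases b <;> simp_all
  obtain ⟨d, t, hd, rfl, ht⟩ := exists_eq_replicate_append false hrest'
  exact ⟨u, d, t, hu, hd, ht, rfl⟩

theorem length_of_mem_pathsFrom {p : List Bool} (hp : p ∈ pathsFrom A B h n) :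
    p.length = 2 * n + h := by
  obtain ⟨⟨-, hend⟩, -, -, hcount⟩ := hp
  rw [heightAt_length] at hend
  have := List.count_true_add_count_false p
  omega

theorem pathsFrom_finite : (pathsFrom A B h n).Finite :=
  (List.finite_length_eq Bool (2 * n + h)).subset fun _ hp => length_of_mem_pathsFrom hp

noncomputable def numPaths (A B : Set ℕ) (h n : ℕ) : ℕ := (pathsFrom A B h n).ncard

variable [DecidablePred (· ∈ A)] [DecidablePred (· ∈ B)]

/-- `⟨u, e⟩`: the length `u` of the first up-run and the height `e = h + u - d` after the first
down-run. -/
def firstPeaks (A B : Set ℕ) [DecidablePred (· ∈ A)] [DecidablePred (· ∈ B)] (h n : ℕ) :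
    Finset (Σ _ : ℕ, ℕ) :=
  ((Finset.range (n + 1)).sigma fun u => Finset.range (h + u)).filter
    fun x => x.1 ∈ A ∧ h + x.1 - x.2 ∈ B

theorem pathsFrom_diff_nil (h0A : 0 ∉ A) :
    pathsFrom A B h n \ {[]} =
      ⋃ x ∈ firstPeaks A B h n, upDown x.1 (h + x.1 - x.2) '' pathsFrom A B x.2 (n - x.1) := by
  ext p
  simp only [firstPeaks, Set.mem_sdiff, Set.mem_singleton_iff, Set.mem_iUnion, Set.mem_image,
    Finset.mem_filter, Finset.mem_sigma, Finset.mem_range, exists_prop]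
  constructor
  · rintro ⟨hp, hne⟩
    obtain ⟨u, d, t, hu, hd, ht, rfl⟩ := exists_eq_upDown hp hne
    obtain ⟨hA, hB, hdh, hun, htmem⟩ := (upDown_mem_pathsFrom hu hd ht).1 hp
    have hd' : h + u - (h + u - d) = d := by omega
    refine ⟨⟨u, h + u - d⟩, ⟨⟨show u < n + 1 by omega, show h + u - d < h + u by omega⟩, hA,
      show h + u - (h + u - d) ∈ B by rwa [hd']⟩, t, htmem, by dsimp only; rw [hd']⟩
  · rintro ⟨⟨u, e⟩, ⟨⟨hun, heu⟩, hA, hB⟩, t, ht, rfl⟩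
    dsimp only at *
    have hu : 0 < u := Nat.pos_of_ne_zero fun h0 => h0A (h0 ▸ hA)
    have he : h + u - (h + u - e) = e := by omega
    refine ⟨(upDown_mem_pathsFrom hu (by omega) ht.2.2.1).2
      ⟨hA, hB, by omega, by omega, by rwa [he]⟩, ?_⟩
    intro hnil
    simpa [hnil] using head?_upDown (d := h + u - e) (t := t) hu


theorem pairwiseDisjoint_firstPeaks :
    (firstPeaks A B h n : Set (Σ _ : ℕ, ℕ)).PairwiseDisjoint
      fun x => upDown x.1 (h + x.1 - x.2) '' pathsFrom A B x.2 (n - x.1) := by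
  rintro ⟨u, e⟩ hx ⟨u', e'⟩ hx' hne
  simp only [firstPeaks, Finset.coe_filter, Finset.mem_sigma, Finset.mem_range,
    Set.mem_ofPred_eq] at hx hx'
  refine Set.disjoint_left.2 ?_
  rintro _ ⟨t, ht, rfl⟩ ⟨t', ht', heq⟩
  dsimp only at ht ht' heq
  obtain ⟨rfl, hd, -⟩ := upDown_inj (by omega) (by omega) ht'.2.2.1 ht.2.2.1 heq
  exact hne (by simp only [Sigma.mk.injEq, heq_eq_eq, true_and]; omega)

theorem numPaths_eq (h0A : 0 ∉ A) (h n : ℕ) :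
    numPaths A B h n = (if h = 0 ∧ n = 0 then 1 else 0) +
      ∑ u ∈ Finset.range (n + 1), ∑ e ∈ Finset.range (h + u),
        if u ∈ A ∧ h + u - e ∈ B then numPaths A B e (n - u) else 0 := by
  have hnil : numPaths A B h n =
      (if h = 0 ∧ n = 0 then 1 else 0) + (pathsFrom A B h n \ {[]}).ncard := by
    split_ifs with h0
    · rw [numPaths, add_comm,
        Set.ncard_sdiff_singleton_add_one (nil_mem_pathsFrom.2 h0) pathsFrom_finite]
    · rw [numPaths, zero_add, Set.sdiff_singleton_eq_self (mt nil_mem_pathsFrom.1 h0)]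
  rw [hnil, pathsFrom_diff_nil h0A, ← Finset.set_biUnion_coe,
    (Finset.finite_toSet _).ncard_biUnion (fun _ _ => pathsFrom_finite.image _)
      pairwiseDisjoint_firstPeaks, finsum_mem_coe_finset, firstPeaks, Finset.sum_filter,
    Finset.sum_sigma]
  simp only [Set.ncard_image_of_injective _ (upDown_injective _ _), numPaths]

end PathsFrom

section GeneratingFunctions

variable (A B : Set ℕ)

noncomputable def pathSeries (h : ℕ) : ℕ⟦X⟧ := mk (numPaths A B h)

theorem genFun_runsIn : genFun (RunsIn A B) = pathSeries A B 0 := by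
  ext n
  rw [genFun, pathSeries, coeff_mk, coeff_mk, numPaths]
  congr 1
  ext p
  simp only [pathsFrom, isDyck_iff_isPathFrom, Set.mem_ofPred_eq, Nat.cast_zero]
  constructor
  · rintro ⟨hlen, hp, hruns⟩
    exact ⟨hp, hruns, hp.head?_ne_false, hp.length_eq_two_mul_iff.1 hlen⟩
  · rintro ⟨hp, hruns, -, hcount⟩
    exact ⟨hp.length_eq_two_mul_iff.2 hcount, hp, hruns⟩

variable [DecidablePred (· ∈ B)]

/-- `D_m`: a down-run of length `m - e ∈ B` from height `m`, followed by a path from height `e`. -/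
noncomputable def downSeries (m : ℕ) : ℕ⟦X⟧ :=
  ∑ e ∈ Finset.range m, if m - e ∈ B then pathSeries A B e else 0

variable {A B} [DecidablePred (· ∈ A)]

theorem pathSeries_eq (h0A : 0 ∉ A) (h : ℕ) :
    pathSeries A B h =
      (if h = 0 then 1 else 0) + ∑' u, X ^ u * (if u ∈ A then downSeries A B (h + u) else 0) := by
  ext n
  rw [map_add, coeff_tsum_X_pow_mul, pathSeries, coeff_mk, numPaths_eq h0A]
  congr 1
  · split_ifs <;> simp_all [coeff_one]
  · refine Finset.sum_congr rfl fun u _ => ?_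
    simp only [downSeries, apply_ite (coeff _), map_sum, pathSeries, coeff_mk, map_zero, ite_and]
    split_ifs <;> simp

end GeneratingFunctions

section UpRunsAtLeast

variable {a : ℕ} {B : Set ℕ} [DecidablePred (· ∈ B)]

/-- `Q_h` for up-runs of length at least `a`, by the length `a + j` of the first up-run. -/
noncomputable def firstPeakSeries (a : ℕ) (B : Set ℕ) [DecidablePred (· ∈ B)] (h : ℕ) :
    ℕ⟦X⟧ :=
  X ^ a * ∑' j, X ^ j * downSeries (Set.Ici a) B (h + a + j)

theorem pathSeries_ici_eq (ha : 0 < a) (h : ℕ) :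
    pathSeries (Set.Ici a) B h = (if h = 0 then 1 else 0) + firstPeakSeries a B h := by
  simp only [pathSeries_eq (by simpa using ha.ne' : 0 ∉ Set.Ici a), Set.mem_Ici,
    tsum_X_pow_mul_ite_le, firstPeakSeries, add_assoc]

theorem downSeries_eq_one_add (ha : 0 < a) {m : ℕ} (hm : m ∈ B) (hm0 : 0 < m) :
    downSeries (Set.Ici a) B m =
      1 + ∑ e ∈ Finset.range m, if m - e ∈ B then firstPeakSeries a B e else 0 := by
  have hsplit : ∀ e ∈ Finset.range m, (if m - e ∈ B then pathSeries (Set.Ici a) B e else 0) =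
      (if e = 0 then 1 else 0) + if m - e ∈ B then firstPeakSeries a B e else 0 := by
    intro e _
    rw [pathSeries_ici_eq ha]
    split_ifs <;> simp_all
  rw [downSeries, Finset.sum_congr rfl hsplit, Finset.sum_add_distrib, Finset.sum_ite_eq',
    if_pos (Finset.mem_range.2 hm0)]

theorem downSeries_succ_eq (ha : 0 < a) {m : ℕ} (hm : m + 1 ∈ B) :
    downSeries (Set.Ici a) B (m + 1) =
      pathSeries (Set.Ici a) B 0 +
        ∑ e ∈ Finset.range m, if m - e ∈ B then firstPeakSeries a B (e + 1) else 0 := by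
  rw [downSeries, Finset.sum_range_succ', Nat.sub_zero, if_pos hm, add_comm]
  congr 1
  refine Finset.sum_congr rfl fun e _ => ?_
  rw [Nat.add_sub_add_right, pathSeries_ici_eq ha, if_neg e.succ_ne_zero, zero_add]

theorem mul_downSeries_eq (ha : 0 < a) {m : ℕ} (hm : m ∈ B) (hm0 : 0 < m) :
    pathSeries (Set.Ici a) B 0 * downSeries (Set.Ici a) B m = pathSeries (Set.Ici a) B 0 +
      ∑ e ∈ Finset.range m,
        if m - e ∈ B then pathSeries (Set.Ici a) B 0 * firstPeakSeries a B e else 0 := by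
  simp only [downSeries_eq_one_add ha hm hm0, mul_add, mul_one, Finset.mul_sum, mul_ite, mul_zero]

/-- Both sides satisfy the same recurrence, each step of which carries a factor `X ^ a`, so they
agree modulo every power of `X`. -/
theorem firstPeakSeries_succ (hB : Set.Ici a ⊆ B) (ha : 0 < a) (h : ℕ) :
    firstPeakSeries a B (h + 1) = pathSeries (Set.Ici a) B 0 * firstPeakSeries a B h := by
  refine eq_of_forall_trunc_eq fun N => ?_
  induction N generalizing h with
  | zero => simp
  | succ N ih =>
    have hdown : ∀ m, a ≤ m → trunc N (downSeries (Set.Ici a) B (m + 1)) =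
        trunc N (pathSeries (Set.Ici a) B 0 * downSeries (Set.Ici a) B m) := fun m hm => by
      rw [downSeries_succ_eq ha (hB (by simp; omega)), mul_downSeries_eq ha (hB hm) (by omega)]
      simp only [map_add, map_sum, apply_ite (trunc N), ih]
    unfold firstPeakSeries
    rw [mul_left_comm (pathSeries _ _ 0), mul_tsum_X_pow_mul (pathSeries _ _ 0)]
    refine trunc_succ_X_pow_mul_congr ha (trunc_tsum_X_pow_mul_congr fun j => ?_)
    rw [show h + 1 + a + j = h + a + j + 1 by omega]
    exact hdown _ (by omega)

theorem downSeries_succ (hB : Set.Ici a ⊆ B) (ha : 0 < a) {m : ℕ} (hm : a ≤ m) :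
    downSeries (Set.Ici a) B (m + 1) =
      pathSeries (Set.Ici a) B 0 * downSeries (Set.Ici a) B m := by
  rw [downSeries_succ_eq ha (hB (by simp; omega)), mul_downSeries_eq ha (hB hm) (by omega)]
  simp only [firstPeakSeries_succ hB ha]

theorem firstPeakSeries_eq_pow_mul (hB : Set.Ici a ⊆ B) (ha : 0 < a) (h : ℕ) :
    firstPeakSeries a B h = pathSeries (Set.Ici a) B 0 ^ h * firstPeakSeries a B 0 := by
  induction h with
  | zero => simp
  | succ h ih => rw [firstPeakSeries_succ hB ha, ih, pow_succ', mul_assoc]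

theorem firstPeakSeries_zero (hB : Set.Ici a ⊆ B) (ha : 0 < a) :
    firstPeakSeries a B 0 = X ^ a * downSeries (Set.Ici a) B a +
      X * pathSeries (Set.Ici a) B 0 * firstPeakSeries a B 0 := by
  have hsplit := tsum_X_pow_mul_eq_add fun j => downSeries (Set.Ici a) B (a + j)
  simp only [add_zero, ← add_assoc, downSeries_succ hB ha (Nat.le_add_right a _),
    ← mul_tsum_X_pow_mul] at hsplit
  rw [firstPeakSeries, zero_add]
  conv_lhs => rw [hsplit]
  ring

end UpRunsAtLeast

section ForbiddenRange

variable {r k : ℕ}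

theorem Ici_succ_subset : Set.Ici (r + 1) ⊆ {d | d ≤ k ∨ r < d} := fun _ hd => Or.inr hd

theorem runsIn_iff {p : List Bool} :
    RunsIn (Set.Ici (r + 1)) {d | d ≤ k ∨ r < d} p ↔
      (∀ j : ℕ, 1 ≤ j → j ≤ r → ¬ HasUpRun p j) ∧
        (∀ j : ℕ, k + 1 ≤ j → j ≤ r → ¬ HasDownRun p j) := by
  simp only [RunsIn, Set.mem_Ici, Set.mem_ofPred_eq]
  refine and_congr ⟨fun h j hj hjr hrun => ?_, fun h m hm hrun => ?_⟩
    ⟨fun h j hj hjr hrun => ?_, fun h m hm hrun => ?_⟩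
  · have := h j hj hrun; omega
  · by_contra; exact h m hm (by omega) hrun
  · have := h j (by omega) hrun; omega
  · by_contra; exact h m (by omega) (by omega) hrun

theorem downSeries_add_pow (hkr : k ≤ r) :
    downSeries (Set.Ici (r + 1)) {d | d ≤ k ∨ r < d} (r + 1) +
        pathSeries (Set.Ici (r + 1)) {d | d ≤ k ∨ r < d} 0 ^ (r + 1 - k) =
      pathSeries (Set.Ici (r + 1)) {d | d ≤ k ∨ r < d} 0 ^ (r + 1) +
        pathSeries (Set.Ici (r + 1)) {d | d ≤ k ∨ r < d} 0 := by
  set B : Set ℕ := {d | d ≤ k ∨ r < d}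
  have hr : 0 < r + 1 := r.succ_pos
  have hB : Set.Ici (r + 1) ⊆ B := Ici_succ_subset
  have hP : pathSeries (Set.Ici (r + 1)) B 0 = firstPeakSeries (r + 1) B 0 + 1 := by
    rw [pathSeries_ici_eq hr, if_pos rfl, add_comm]
  have hfilter : (Finset.range (r + 1)).filter (fun e => r + 1 - e ∈ B) =
      insert 0 (Finset.Ico (r + 1 - k) (r + 1)) := by
    ext e
    simp only [B, Finset.mem_filter, Finset.mem_range, Set.mem_ofPred_eq, Finset.mem_insert,
      Finset.mem_Ico]
    omega
  rw [downSeries_eq_one_add hr (hB Set.self_mem_Ici) hr, ← Finset.sum_filter, hfilter,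
    Finset.sum_insert (by simp; omega),
    Finset.sum_congr rfl fun e _ => firstPeakSeries_eq_pow_mul hB hr e, hP,
    ← Finset.sum_Ico_pow_mul_add_pow _ (show r + 1 - k ≤ r + 1 by omega)]
  ring

end ForbiddenRange

end RunRestrictedDyck

open RunRestrictedDyck

theorem stmt16_general (r k : ℕ) (hkr : k ≤ r) :
    let P := genFun (fun p => (∀ j : ℕ, 1 ≤ j → j ≤ r → ¬ HasUpRun p j) ∧
      (∀ j : ℕ, k + 1 ≤ j → j ≤ r → ¬ HasDownRun p j))
    P + PowerSeries.X * P + PowerSeries.X ^ (r + 1) * P ^ (r + 1 - k) =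
      1 + PowerSeries.X * P ^ 2 + PowerSeries.X ^ (r + 1) * P +
        PowerSeries.X ^ (r + 1) * P ^ (r + 1) := by
  intro P
  set B : Set ℕ := {d | d ≤ k ∨ r < d}
  have hP : P = pathSeries (Set.Ici (r + 1)) B 0 := by
    rw [← genFun_runsIn]
    exact congrArg genFun (funext fun p => propext runsIn_iff.symm)
  have hP0 : P = 1 + firstPeakSeries (r + 1) B 0 := by
    rw [hP, pathSeries_ici_eq r.succ_pos, if_pos rfl]
  have hQ := firstPeakSeries_zero (Ici_succ_subset (k := k)) r.succ_pos
  have hD := downSeries_add_pow hkr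
  rw [← hP] at hQ hD
  calc P + X * P + X ^ (r + 1) * P ^ (r + 1 - k)
      = 1 + (X ^ (r + 1) * downSeries (Set.Ici (r + 1)) B (r + 1) +
          X * P * firstPeakSeries (r + 1) B 0) + X * P + X ^ (r + 1) * P ^ (r + 1 - k) := by
        rw [← hQ, ← hP0]
    _ = 1 + X * P * (1 + firstPeakSeries (r + 1) B 0) +
          X ^ (r + 1) * (downSeries (Set.Ici (r + 1)) B (r + 1) + P ^ (r + 1 - k)) := by ring
    _ = 1 + X * P ^ 2 + X ^ (r + 1) * P + X ^ (r + 1) * P ^ (r + 1) := by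
        rw [← hP0, hD]
        ring

/-- For `1 ≤ k ≤ r` and `P` the generating function of Dyck paths with no up-run length in
`{1, …, r}` and no down-run length in `{k+1, …, r}`:
`P + zP + z^(r+1) P^(r+1−k) = 1 + zP² + z^(r+1) P + z^(r+1) P^(r+1)`. -/
theorem stmt16 (r k : ℕ) (hk : 1 ≤ k) (hkr : k ≤ r) :
    let P := genFun (fun p => (∀ j : ℕ, 1 ≤ j → j ≤ r → ¬ HasUpRun p j) ∧
      (∀ j : ℕ, k + 1 ≤ j → j ≤ r → ¬ HasDownRun p j))
    P + PowerSeries.X * P + PowerSeries.X ^ (r + 1) * P ^ (r + 1 - k) =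
      1 + PowerSeries.X * P ^ 2 + PowerSeries.X ^ (r + 1) * P +
        PowerSeries.X ^ (r + 1) * P ^ (r + 1) :=
  stmt16_general r k hkr
end
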